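/- arXiv:1412.5418 — 12 statements merged into one kernel-verified Lean document; each statement's English description precedes it below -/
import Mathlib

section
/- If A is an n×n real matrix, then A² has at most n² − 1 negative entries. -/
/-!
If every entry of `A * A` were negative, `P = -(A * A)` would be an entrywise positive matrix. By
Perron's theorem `P` has an eigenvalue `r > 0` whose eigenspace is spanned by a positive vector
`v`. Since `A` commutes with `P`, the vector `A v` lies in that eigenspace, so `A v = c v` and
`(A * A) v = c² v`; but `(A * A) v = -r v`, which is impossible as `c² ≥ 0 > -r`.

Perron's eigenpair is obtained as in Collatz–Wielandt: maximise `t` over the compact set of pairs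
`(t, x)` with `x` in the standard simplex and `t x ≤ P x`; at a maximiser equality must hold, since
otherwise applying `P` once more would allow a strictly larger `t`.
-/

open Finset

theorem exists_smul_le_and_mul_eq {ι : Type*} [Fintype ι] [Nonempty ι] {v : ι → ℝ}
    (hv : ∀ i, 0 < v i) (u : ι → ℝ) : ∃ c : ℝ, c • v ≤ u ∧ ∃ i, c * v i = u i := by
  obtain ⟨i, -, hi⟩ := exists_min_image univ (fun i => u i / v i) univ_nonempty
  refine ⟨u i / v i, fun j => ?_, i, div_mul_cancel₀ _ (hv i).ne'⟩
  simpa [le_div_iff₀ (hv j)] using hi j (mem_univ j)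

theorem ne_zero_of_mem_stdSimplex {ι : Type*} [Fintype ι] {x : ι → ℝ}
    (hx : x ∈ stdSimplex ℝ ι) : x ≠ 0 := by
  rintro rfl
  simp [stdSimplex] at hx

namespace Matrix

variable {ι : Type*} [Fintype ι] {P : Matrix ι ι ℝ}

theorem mulVec_apply_pos_of_pos (hP : ∀ i j, 0 < P i j) {x : ι → ℝ} (hx : 0 ≤ x)
    (hx₀ : x ≠ 0) (i : ι) : 0 < (P *ᵥ x) i := by
  obtain ⟨j, hj⟩ : ∃ j, x j ≠ 0 := Function.ne_iff.1 hx₀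
  calc 0 < P i j * x j := mul_pos (hP i j) (lt_of_le_of_ne (hx j) hj.symm)
    _ ≤ ∑ k, P i k * x k :=
      single_le_sum (fun k _ => mul_nonneg (hP i k).le (hx k)) (mem_univ j)

variable (P) in
def collatzWielandtSet : Set (ℝ × (ι → ℝ)) :=
  {p | 0 ≤ p.1 ∧ p.2 ∈ stdSimplex ℝ ι ∧ p.1 • p.2 ≤ P *ᵥ p.2}

theorem isCompact_collatzWielandtSet (hP : ∀ i j, 0 ≤ P i j) :
    IsCompact P.collatzWielandtSet := by
  have hclosed : IsClosed P.collatzWielandtSet :=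
    (isClosed_le continuous_const continuous_fst).inter
      ((isClosed_stdSimplex ℝ ι).preimage continuous_snd |>.inter
        (isClosed_le (continuous_fst.smul continuous_snd)
          (continuous_const.matrix_mulVec continuous_snd)))
  refine ((isCompact_Icc (a := 0) (b := ∑ i, ∑ j, P i j)).prod
    (isCompact_stdSimplex ℝ ι)).of_isClosed_subset hclosed ?_
  rintro ⟨t, x⟩ ⟨ht, hx, hle⟩
  refine ⟨⟨ht, ?_⟩, hx⟩
  calc t = ∑ i, t * x i := by rw [← mul_sum, hx.2, mul_one]
    _ ≤ ∑ i, (P *ᵥ x) i := sum_le_sum fun i _ => hle i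
    _ ≤ ∑ i, ∑ j, P i j := sum_le_sum fun i _ => sum_le_sum fun j _ =>
      mul_le_of_le_one_right (hP i j) (mem_Icc_of_mem_stdSimplex hx j).2

theorem smul_mem_collatzWielandtSet {t : ℝ} {x : ι → ℝ} (ht : 0 ≤ t) (hx : 0 ≤ x)
    (hx₀ : x ≠ 0) (hle : t • x ≤ P *ᵥ x) : (t, (∑ i, x i)⁻¹ • x) ∈ P.collatzWielandtSet := by
  obtain ⟨j, hj⟩ : ∃ j, x j ≠ 0 := Function.ne_iff.1 hx₀
  have hsum : 0 < ∑ i, x i :=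
    sum_pos' (fun i _ => hx i) ⟨j, mem_univ j, lt_of_le_of_ne (hx j) hj.symm⟩
  refine ⟨ht, ⟨fun i => mul_nonneg (inv_nonneg.2 hsum.le) (hx i), ?_⟩, ?_⟩
  · simp only [Pi.smul_apply, smul_eq_mul, ← mul_sum, inv_mul_cancel₀ hsum.ne']
  · rw [mulVec_smul, smul_comm]
    exact smul_le_smul_of_nonneg_left hle (inv_nonneg.2 hsum.le)

theorem mulVec_eq_smul_of_isMaxOn (hP : ∀ i j, 0 < P i j) {p : ℝ × (ι → ℝ)}
    (hp : p ∈ P.collatzWielandtSet) (hmax : IsMaxOn Prod.fst P.collatzWielandtSet p) :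
    P *ᵥ p.2 = p.1 • p.2 := by
  obtain ⟨r, v⟩ := p
  obtain ⟨hr, hv, hle⟩ := hp
  by_contra hne
  have hv₀ := ne_zero_of_mem_stdSimplex hv
  obtain ⟨j, -⟩ := Function.ne_iff.1 hv₀
  have : Nonempty ι := ⟨j⟩
  set w := P *ᵥ v - r • v
  have hw : 0 ≤ w := sub_nonneg.2 hle
  have hw₀ : w ≠ 0 := sub_ne_zero.2 hne
  set y := P *ᵥ v
  have hy : ∀ i, 0 < y i := mulVec_apply_pos_of_pos hP hv.1 hv₀
  obtain ⟨ε, hεle, i, hεi⟩ := exists_smul_le_and_mul_eq hy (P *ᵥ w)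
  have hε : 0 < ε := pos_of_mul_pos_left (hεi ▸ mulVec_apply_pos_of_pos hP hw hw₀ i) (hy i).le
  -- `P y = r y + P w` and `P w ≥ ε y`, so `r + ε` is admissible for `y`.
  have hPy : (r + ε) • y ≤ P *ᵥ y := by
    have : P *ᵥ y = r • y + P *ᵥ w := by
      simp only [w, mulVec_sub, mulVec_smul]
      abel
    rw [this, add_smul]
    exact add_le_add le_rfl hεle
  have : r + ε ≤ r := hmax (smul_mem_collatzWielandtSet (by positivity) (fun i => (hy i).le)
    (fun h => (hy i).ne' (congrFun h i)) hPy)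
  linarith

theorem exists_pos_eigenvector_of_pos [Nonempty ι] (hP : ∀ i j, 0 < P i j) :
    ∃ r : ℝ, 0 < r ∧ ∃ v : ι → ℝ, (∀ i, 0 < v i) ∧ P *ᵥ v = r • v := by
  classical
  obtain ⟨i₀⟩ := ‹Nonempty ι›
  have hnonempty : (0, Pi.single i₀ 1) ∈ P.collatzWielandtSet := by
    refine ⟨le_rfl, single_mem_stdSimplex ℝ i₀, ?_⟩
    rw [zero_smul]
    exact fun i => sum_nonneg fun j _ =>
      mul_nonneg (hP i j).le ((single_mem_stdSimplex ℝ i₀).1 j)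
  obtain ⟨⟨r, v⟩, hmem, hmax⟩ :=
    (isCompact_collatzWielandtSet fun i j => (hP i j).le).exists_isMaxOn ⟨_, hnonempty⟩
      continuous_fst.continuousOn
  have heig := mulVec_eq_smul_of_isMaxOn hP hmem hmax
  have hv := hmem.2.1
  have hpos : ∀ i, 0 < r * v i := fun i => by
    simpa [heig] using mulVec_apply_pos_of_pos hP hv.1 (ne_zero_of_mem_stdSimplex hv) i
  have hr : 0 < r := pos_of_mul_pos_left (hpos i₀) (hv.1 i₀)
  exact ⟨r, hr, v, fun i => pos_of_mul_pos_right (hpos i) hr.le, heig⟩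

theorem eq_smul_of_mulVec_eq_smul (hP : ∀ i j, 0 < P i j) {r : ℝ} {u v : ι → ℝ}
    (hv : ∀ i, 0 < v i) (hPv : P *ᵥ v = r • v) (hPu : P *ᵥ u = r • u) :
    ∃ c : ℝ, u = c • v := by
  cases isEmpty_or_nonempty ι
  · exact ⟨0, Subsingleton.elim _ _⟩
  obtain ⟨c, hle, i, hi⟩ := exists_smul_le_and_mul_eq hv u
  refine ⟨c, sub_eq_zero.1 ?_⟩
  -- `u - c • v` is a nonnegative eigenvector vanishing at `i`; were it nonzero, `P` would make
  -- its `i`-th entry positive.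
  have hPw : P *ᵥ (u - c • v) = r • (u - c • v) := by
    rw [mulVec_sub, mulVec_smul, hPu, hPv, smul_sub, smul_comm]
  by_contra hw₀
  have := mulVec_apply_pos_of_pos hP (sub_nonneg.2 hle) hw₀ i
  simp [hPw, hi] at this

theorem exists_mul_self_apply_nonneg [Nonempty ι] (A : Matrix ι ι ℝ) :
    ∃ i j, 0 ≤ (A * A) i j := by
  by_contra! h
  have hP : ∀ i j, 0 < (-(A * A)) i j := fun i j => neg_pos.2 (h i j)
  obtain ⟨r, hr, v, hv, hPv⟩ := exists_pos_eigenvector_of_pos hP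
  have hPAv : -(A * A) *ᵥ (A *ᵥ v) = r • (A *ᵥ v) := by
    rw [mulVec_mulVec, show -(A * A) * A = A * -(A * A) by noncomm_ring, ← mulVec_mulVec, hPv,
      mulVec_smul]
  obtain ⟨c, hc⟩ := eq_smul_of_mulVec_eq_smul hP hv hPv hPAv
  have hsq : (A * A) *ᵥ v = (c * c) • v := by
    rw [← mulVec_mulVec, hc, mulVec_smul, hc, smul_smul]
  obtain ⟨i⟩ := ‹Nonempty ι›
  have := congrFun hPv i
  simp only [neg_mulVec, hsq, Pi.neg_apply, Pi.smul_apply, smul_eq_mul] at this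
  nlinarith [hv i, mul_self_nonneg c]

end Matrix

theorem square_has_at_most_n_sq_sub_one_negative_entries (n : ℕ)
    (A : Matrix (Fin n) (Fin n) ℝ) :
    (Finset.univ.filter fun p : Fin n × Fin n => (A * A) p.1 p.2 < 0).card ≤ n ^ 2 - 1 := by
  rcases isEmpty_or_nonempty (Fin n) with h | h
  · simp
  obtain ⟨i, j, hij⟩ := A.exists_mul_self_apply_nonneg
  have hss : univ.filter (fun p : Fin n × Fin n => (A * A) p.1 p.2 < 0) ⊂ univ :=
    filter_ssubset.2 ⟨(i, j), mem_univ _, hij.not_gt⟩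
  have hlt := card_lt_card hss
  rw [card_univ, Fintype.card_prod, Fintype.card_fin] at hlt
  rw [sq]
  omega
end

section
/- Every square matrix A over a field F is similar over F to its transpose Aᵀ; that is, there exists an invertible matrix P over F with P⁻¹AP = Aᵀ. -/
/-!
A matrix `J` with `Aᵀ * J = J * A` and `det J ≠ 0` conjugates `A` into `Aᵀ`, and such a `J` is
the Gram matrix of a nondegenerate bilinear form for which `A` is self-adjoint. To build the
form, view `Fⁿ` as an `F[X]`-module through `A`: by the structure theorem over the PID `F[X]` it
is a direct sum of cyclic modules `F[X] ⧸ (g)`, on which `(u, v) ↦ coeff_{deg g - 1} (u * v mod g)`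
is nondegenerate and `F[X]`-invariant; orthogonal sums of such forms are again such forms.
-/

open Polynomial DirectSum

/-- For finite-dimensional `M` this says that `M` is isomorphic to its `F`-dual as an
`R`-module. -/
def HasSeparatingInvariantForm (F R M : Type*) [CommSemiring F] [AddCommMonoid M] [Module F M]
    [SMul R M] : Prop :=
  ∃ B : M →ₗ[F] M →ₗ[F] F, B.SeparatingLeft ∧ ∀ (r : R) (x y : M), B (r • x) y = B x (r • y)

namespace HasSeparatingInvariantForm

variable {F : Type*} [CommSemiring F]

theorem of_linearEquiv {R M N : Type*} [Semiring R] [SMul F R] [AddCommMonoid M] [Module F M]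
    [Module R M] [IsScalarTower F R M] [AddCommMonoid N] [Module F N] [Module R N]
    [IsScalarTower F R N] (e : M ≃ₗ[R] N) (h : HasSeparatingInvariantForm F R N) :
    HasSeparatingInvariantForm F R M := by
  obtain ⟨B, hsep, hinv⟩ := h
  let e' := e.restrictScalars F
  refine ⟨B.compl₁₂ e'.toLinearMap e'.toLinearMap, fun x hx => ?_, fun r x y => ?_⟩
  · refine e'.map_eq_zero_iff.mp (hsep _ fun y => ?_)
    simpa [e'] using hx (e.symm y)
  · simpa [e'] using hinv r (e x) (e y)

theorem directSum {R ι : Type*} [Semiring R] [Fintype ι] {N : ι → Type*}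
    [∀ i, AddCommMonoid (N i)] [∀ i, Module F (N i)] [∀ i, Module R (N i)]
    (h : ∀ i, HasSeparatingInvariantForm F R (N i)) :
    HasSeparatingInvariantForm F R (⨁ i, N i) := by
  classical
  choose B hsep hinv using h
  refine ⟨∑ i, (B i).compl₁₂ (component F ι N i) (component F ι N i), fun x hx => ?_,
    fun r x y => ?_⟩
  · ext j
    refine hsep j (x j) fun v => ?_
    simpa [← apply_eq_component, of_apply, apply_dite] using hx (of N j v)
  · simp only [LinearMap.coe_sum, Finset.sum_apply, LinearMap.compl₁₂_apply,
      ← apply_eq_component, DirectSum.smul_apply, hinv]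

theorem of_functional {R S : Type*} [CommSemiring R] [CommSemiring S] [Algebra F S] [Algebra R S]
    (φ : S →ₗ[F] F) (hφ : ∀ u ≠ 0, ∃ v, φ (u * v) ≠ 0) : HasSeparatingInvariantForm F R S := by
  refine ⟨(LinearMap.mul F S).compr₂ φ, fun u hu => ?_, fun r u v => by simp⟩
  by_contra h
  obtain ⟨v, hv⟩ := hφ u h
  exact hv (hu v)

end HasSeparatingInvariantForm

theorem AdjoinRoot.exists_coeff_modByMonicHom_mul_ne_zero {R : Type*} [CommRing R] {g : R[X]}
    (hg : g.Monic) {u : AdjoinRoot g} (hu : u ≠ 0) :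
    ∃ v, (modByMonicHom hg (u * v)).coeff (g.natDegree - 1) ≠ 0 := by
  have : Nontrivial (AdjoinRoot g) := nontrivial_of_ne u 0 hu
  have : Nontrivial R := (of g).domain_nontrivial
  set a := modByMonicHom hg u
  have hua : mk g a = u := mk_leftInverse hg u
  have ha : a ≠ 0 := fun h => hu (by rw [← hua, h, map_zero])
  have hlt : a.natDegree < g.natDegree := by
    obtain ⟨f, rfl⟩ := mk_surjective u
    exact natDegree_lt_natDegree ha (by simpa [a] using degree_modByMonic_lt f hg)
  -- multiplying by `X ^ m` shifts the leading coefficient of `a` to degree `deg g - 1`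
  set m := g.natDegree - 1 - a.natDegree
  have hdeg : (a * X ^ m).natDegree = g.natDegree - 1 := by
    rw [natDegree_mul_X_pow m ha]; omega
  refine ⟨mk g (X ^ m), ?_⟩
  rw [← hua, ← map_mul, modByMonicHom_mk,
    (modByMonic_eq_self_iff hg).mpr (degree_lt_degree (by omega)), ← hdeg, coeff_natDegree,
    leadingCoeff_mul_X_pow]
  exact leadingCoeff_ne_zero.mpr ha

theorem hasSeparatingInvariantForm_quotient_span_singleton_of_monic {R : Type*} [CommRing R]
    {g : R[X]} (hg : g.Monic) : HasSeparatingInvariantForm R R[X] (R[X] ⧸ Ideal.span {g}) :=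
  .of_functional (lcoeff R (g.natDegree - 1) ∘ₗ AdjoinRoot.modByMonicHom hg)
    fun _ hu => AdjoinRoot.exists_coeff_modByMonicHom_mul_ne_zero hg hu

theorem hasSeparatingInvariantForm_quotient_span_singleton {K : Type*} [Field K] {q : K[X]}
    (hq : q ≠ 0) : HasSeparatingInvariantForm K K[X] (K[X] ⧸ K[X] ∙ q) := by
  classical
  exact .of_linearEquiv (Submodule.quotEquivOfEq _ _
      (Ideal.span_singleton_eq_span_singleton.mpr (associated_normalize q)))
    (hasSeparatingInvariantForm_quotient_span_singleton_of_monic (monic_normalize hq))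

theorem hasSeparatingInvariantForm_of_isTorsion {K M : Type*} [Field K] [AddCommGroup M]
    [Module K M] [Module K[X] M] [IsScalarTower K K[X] M] [Module.Finite K[X] M]
    (hM : Module.IsTorsion K[X] M) : HasSeparatingInvariantForm K K[X] M := by
  obtain ⟨ι, _, p, hp, e, ⟨ψ⟩⟩ := Module.equiv_directSum_of_isTorsion hM
  exact .of_linearEquiv ψ <| .directSum fun i =>
    hasSeparatingInvariantForm_quotient_span_singleton (pow_ne_zero _ (hp i).ne_zero)

theorem LinearMap.exists_separatingLeft_isSelfAdjoint {K V : Type*} [Field K] [AddCommGroup V]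
    [Module K V] [FiniteDimensional K V] (f : Module.End K V) :
    ∃ B : V →ₗ[K] V →ₗ[K] K, B.SeparatingLeft ∧ B.IsSelfAdjoint f := by
  obtain ⟨B, hsep, hinv⟩ :=
    hasSeparatingInvariantForm_of_isTorsion (Module.AEval.isTorsion_of_finiteDimensional K V f)
  let e := Module.AEval'.of f
  refine ⟨B.compl₁₂ e.toLinearMap e.toLinearMap, fun x hx => ?_, fun x y => ?_⟩
  · refine e.map_eq_zero_iff.mp (hsep _ fun y => ?_)
    simpa using hx (e.symm y)
  · have := hinv X (e x) (e y)
    rwa [Module.AEval'.X_smul_of, Module.AEval'.X_smul_of] at this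

theorem matrix_similar_to_transpose (F : Type*) [Field F] (n : ℕ)
    (A : Matrix (Fin n) (Fin n) F) :
    ∃ P : Matrix (Fin n) (Fin n) F, IsUnit P ∧ P⁻¹ * A * P = A.transpose := by
  obtain ⟨B, hsep, hadj⟩ := (Matrix.toLin' A).exists_separatingLeft_isSelfAdjoint
  set J := LinearMap.toMatrix₂' F B
  have hJ : IsUnit J.det :=
    isUnit_iff_ne_zero.mpr (Matrix.separatingLeft_iff_det_ne_zero.mp hsep.toMatrix₂')
  have hJA : A.transpose * J = J * A := by
    rw [← Matrix.toLinearMap₂'_toMatrix' (R := F) B] at hadj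
    exact (isAdjointPair_toLinearMap₂' J J A A).mp hadj
  refine ⟨J⁻¹, J.isUnit_nonsing_inv_iff.mpr (J.isUnit_iff_isUnit_det.mpr hJ), ?_⟩
  rw [J.nonsing_inv_nonsing_inv hJ, ← hJA, Matrix.mul_assoc, J.mul_nonsing_inv hJ, Matrix.mul_one]
end

section
/- Every square matrix over a field is the product of two symmetric matrices over that field. -/
/-!
Write `A = H⁻¹ * (H * A)` with `H` symmetric, invertible and `Aᵀ * H = H * A`, so that `H * A` is
symmetric too. Such an `H` is the Gram matrix of a nondegenerate symmetric bilinear form for which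
`A` is self-adjoint. To build one, view `Fⁿ` as an `F[X]`-module through `A`: it is a direct sum of
cyclic modules `F[X] ⧸ (q)`, and on `F[X] ⧸ (q)`, `q` monic of degree `d`, the form sending `(f, g)`
to the coefficient of `X ^ (d - 1)` in `(f * g) %ₘ q` works: if `f ≠ 0` has degree `m < d`,
pairing it with `X ^ (d - 1 - m)` gives the leading coefficient of `f`.
-/

open Polynomial DirectSum
open scoped Matrix
open LinearMap (BilinForm)

namespace LinearMap.BilinForm

variable {F R : Type*} [CommSemiring F]

variable (R) in
structure IsNondegSymmBalanced {N : Type*} [AddCommMonoid N] [Module F N] [SMul R N]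
    (B : BilinForm F N) : Prop where
  isSymm : B.IsSymm
  separatingLeft : B.SeparatingLeft
  smul_left_eq_smul_right : ∀ (r : R) (x y : N), B (r • x) y = B x (r • y)

theorem IsNondegSymmBalanced.congr [Semiring R] [Module F R] {N N' : Type*} [AddCommMonoid N]
    [AddCommMonoid N'] [Module F N] [Module F N'] [Module R N] [Module R N']
    [IsScalarTower F R N] [IsScalarTower F R N'] {B : BilinForm F N}
    (hB : B.IsNondegSymmBalanced R) (e : N ≃ₗ[R] N') :
    (congr (e.restrictScalars F) B).IsNondegSymmBalanced R where
  isSymm := ⟨fun _ _ => hB.isSymm.eq _ _⟩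
  separatingLeft := hB.separatingLeft.congr _ _
  smul_left_eq_smul_right r x y := by
    simpa [congr_apply] using hB.smul_left_eq_smul_right r (e.symm x) (e.symm y)

theorem IsNondegSymmBalanced.directSum [Semiring R] {ι : Type*} [Fintype ι] [DecidableEq ι]
    {N : ι → Type*} [∀ i, AddCommMonoid (N i)] [∀ i, Module F (N i)] [∀ i, Module R (N i)]
    {B : ∀ i, BilinForm F (N i)} (hB : ∀ i, (B i).IsNondegSymmBalanced R) :
    (∑ i, (B i).comp (component F ι N i) (component F ι N i)).IsNondegSymmBalanced R := by
  have hsum (x y : ⨁ i, N i) :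
      (∑ i, (B i).comp (component F ι N i) (component F ι N i)) x y = ∑ i, B i (x i) (y i) := by
    simp only [sum_apply, comp_apply]
    rfl
  refine ⟨⟨fun x y => ?_⟩, fun x hx => ?_, fun r x y => ?_⟩
  · simp only [hsum, (hB _).isSymm.eq (x _)]
  · ext i
    refine (hB i).separatingLeft _ fun z => ?_
    have := hx (of N i z)
    rw [hsum, Finset.sum_eq_single i (fun j _ hj => by rw [of_eq_of_ne _ _ _ hj, map_zero])
      (by simp)] at this
    simpa using this
  · simp only [hsum, DirectSum.smul_apply, (hB _).smul_left_eq_smul_right]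

theorem isNondegSymmBalanced_mul_compr₂ [CommSemiring R] {S : Type*} [CommSemiring S]
    [Algebra F S] [Algebra R S] {ℓ : S →ₗ[F] F}
    (hℓ : ((LinearMap.mul F S).compr₂ ℓ).SeparatingLeft) :
    IsNondegSymmBalanced R ((LinearMap.mul F S).compr₂ ℓ) where
  isSymm := ⟨fun x y => by simp only [compr₂_apply, mul_apply', mul_comm]⟩
  separatingLeft := hℓ
  smul_left_eq_smul_right r x y := by
    simp only [compr₂_apply, mul_apply', smul_mul_assoc, mul_smul_comm]

end LinearMap.BilinForm

open LinearMap.BilinForm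

namespace Polynomial

variable {F : Type*} [Field F] {q : F[X]}

noncomputable def quotientSpanCoeffModByMonic (hq : q.Monic) (k : ℕ) :
    (F[X] ⧸ Submodule.span F[X] {q}) →ₗ[F] F :=
  ((Submodule.span F[X] {q}).restrictScalars F).liftQ (lcoeff F k ∘ₗ modByMonicHom q)
      (fun f hf => by
        rw [Submodule.restrictScalars_mem, Submodule.mem_span_singleton] at hf
        obtain ⟨g, rfl⟩ := hf
        simp [(modByMonic_eq_zero_iff_dvd hq).2 (dvd_mul_left q g)]) ∘ₗ
    (Submodule.Quotient.restrictScalarsEquiv F _).symm.toLinearMap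

@[simp]
theorem quotientSpanCoeffModByMonic_mk (hq : q.Monic) (k : ℕ) (f : F[X]) :
    quotientSpanCoeffModByMonic hq k (Ideal.Quotient.mk (Ideal.span {q}) f) = (f %ₘ q).coeff k :=
  rfl

theorem separatingLeft_mul_compr₂_quotientSpanCoeffModByMonic (hq : q.Monic) :
    ((LinearMap.mul F (F[X] ⧸ Submodule.span F[X] {q})).compr₂
      (quotientSpanCoeffModByMonic hq (q.natDegree - 1))).SeparatingLeft := by
  intro x hx
  obtain ⟨f, rfl⟩ := Ideal.Quotient.mk_surjective x
  have hmk : Ideal.Quotient.mk (Ideal.span {q}) (f %ₘ q) = Ideal.Quotient.mk _ f :=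
    Ideal.Quotient.eq.2 (Ideal.mem_span_singleton.2 (dvd_modByMonic_sub f q))
  rw [← hmk] at hx ⊢
  rw [Ideal.Quotient.eq_zero_iff_dvd]
  set r := f %ₘ q
  by_contra hqr
  have hr0 : r ≠ 0 := fun h => hqr (h ▸ dvd_zero q)
  have hdeg : r.natDegree < q.natDegree := natDegree_lt_natDegree hr0 (degree_modByMonic_lt f hq)
  set k := q.natDegree - 1 - r.natDegree
  have hmod : (r * X ^ k) %ₘ q = r * X ^ k := by
    refine (modByMonic_eq_self_iff hq).2 (degree_lt_degree ?_)
    rw [natDegree_mul_X_pow k hr0]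
    omega
  apply leadingCoeff_ne_zero.2 hr0
  have := hx (Ideal.Quotient.mk _ (X ^ k))
  rwa [LinearMap.compr₂_apply, LinearMap.mul_apply', ← map_mul, quotientSpanCoeffModByMonic_mk,
    hmod, show q.natDegree - 1 = r.natDegree + k by omega, coeff_mul_X_pow] at this

theorem exists_isNondegSymmBalanced_quotient_span_singleton (hq : q ≠ 0) :
    ∃ B : BilinForm F (F[X] ⧸ Submodule.span F[X] {q}), B.IsNondegSymmBalanced F[X] := by
  have hmonic := monic_mul_leadingCoeff_inv hq
  have hspan : Submodule.span F[X] {q * C q.leadingCoeff⁻¹} = Submodule.span F[X] {q} :=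
    Ideal.span_singleton_mul_right_unit (isUnit_C.2 (by simpa using hq)) q
  exact ⟨_, (isNondegSymmBalanced_mul_compr₂
    (separatingLeft_mul_compr₂_quotientSpanCoeffModByMonic hmonic)).congr
      (Submodule.quotEquivOfEq _ _ hspan)⟩

end Polynomial

theorem Module.End.exists_isSymm_separatingLeft_isAdjointPair {F V : Type*} [Field F]
    [AddCommGroup V] [Module F V] [FiniteDimensional F V] (φ : Module.End F V) :
    ∃ B : BilinForm F V, B.IsSymm ∧ B.SeparatingLeft ∧ B.IsAdjointPair B φ φ := by
  classical
  obtain ⟨ι, _, p, hp, e, ⟨eqv⟩⟩ :=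
    Module.equiv_directSum_of_isTorsion (Module.AEval.isTorsion_of_finiteDimensional F V φ)
  choose B hB using fun i => exists_isNondegSymmBalanced_quotient_span_singleton
    (pow_ne_zero (e i) (hp i).ne_zero)
  have hM := (IsNondegSymmBalanced.directSum hB).congr eqv.symm
  refine ⟨congr (AEval'.of φ).symm _, ⟨fun x y => hM.isSymm.eq _ _⟩, hM.separatingLeft.congr _ _,
    fun x y => ?_⟩
  simp only [congr_apply, LinearEquiv.symm_symm, ← AEval'.X_smul_of]
  exact hM.smul_left_eq_smul_right X _ _

theorem Matrix.exists_isSymm_det_ne_zero_transpose_mul_eq {F n : Type*} [Field F] [Fintype n]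
    [DecidableEq n] (A : Matrix n n F) :
    ∃ H : Matrix n n F, H.IsSymm ∧ H.det ≠ 0 ∧ Aᵀ * H = H * A := by
  obtain ⟨B, hsymm, hsep, hadj⟩ :=
    Module.End.exists_isSymm_separatingLeft_isAdjointPair (Matrix.toLin' A)
  refine ⟨LinearMap.toMatrix₂' F B, isSymm_toMatrix'_iff_isSymm.2 hsymm,
    Matrix.separatingLeft_iff_det_ne_zero.1 (LinearMap.separatingLeft_toMatrix₂'_iff.2 hsep), ?_⟩
  rw [← Matrix.toLinearMap₂'_toMatrix' (R := F) B] at hadj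
  exact (isAdjointPair_toLinearMap₂' _ _ _ _).1 hadj

theorem matrix_eq_product_of_two_symmetric (F : Type*) [Field F] (n : ℕ)
    (A : Matrix (Fin n) (Fin n) F) :
    ∃ S T : Matrix (Fin n) (Fin n) F,
      S.transpose = S ∧ T.transpose = T ∧ A = S * T := by
  obtain ⟨H, hHsymm, hdet, hcomm⟩ := A.exists_isSymm_det_ne_zero_transpose_mul_eq
  refine ⟨H⁻¹, H * A, ?_, ?_, ?_⟩
  · rw [Matrix.transpose_nonsing_inv, hHsymm.eq]
  · rw [Matrix.transpose_mul, hHsymm.eq, hcomm]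
  · rw [← Matrix.mul_assoc, Matrix.nonsing_inv_mul H (Ne.isUnit hdet), Matrix.one_mul]
end

section
/- Roth's theorem: For matrices A (m×m), B (n×n), C (m×n) over a field, the equation AX − XB = C has a solution X if and only if the block matrices [[A, C],[0, B]] and [[A, 0],[0, B]] are similar. -/
/-!
Flanders–Wimmer dimension count. For `T_C = [[A, C], [0, B]]` consider the solution space `K_C`
of `T_C Z = Z B` with `Z = [[X], [Y]]`, i.e. `A X + C Y = X B` and `B Y = Y B`. The dimension
of `K_C` is invariant under similarity of `T_C`, its intersection with `{Y = 0}` does not depend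
on `C`, and the projections of `K_C` and `K_0` to the `Y`-component both lie in the centralizer
of `B`, which `K_0` fills. Counting dimensions, if `T_C ∼ T_0` then `K_C` projects onto the
centralizer as well, so some `Z ∈ K_C` has `Y = -1`, and its `X` solves `A X - X B = C`.
-/

open Matrix Module LinearMap

theorem Submodule.finrank_map_add_finrank_inf_ker {K V W : Type*} [DivisionRing K]
    [AddCommGroup V] [Module K V] [AddCommGroup W] [Module K W] [FiniteDimensional K V]
    (f : V →ₗ[K] W) (p : Submodule K V) :
    finrank K (p.map f) + finrank K ↥(p ⊓ ker f) = finrank K p := by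
  have h := finrank_range_add_finrank_ker (f.domRestrict p)
  have hker : (ker f).comap p.subtype = (p ⊓ ker f).comap p.subtype := by
    rw [Submodule.comap_inf, Submodule.comap_subtype_self, top_inf_eq]
  rwa [range_domRestrict, ker_domRestrict, hker,
    (Submodule.comapSubtypeEquivOfLe inf_le_left).finrank_eq] at h

namespace Matrix

section CommRing

variable {R : Type*} [CommRing R] {l m n k : Type*}

def toRows₂LinearMap : Matrix (m ⊕ n) k R →ₗ[R] Matrix n k R where
  toFun := toRows₂
  map_add' _ _ := rfl
  map_smul' _ _ := rfl

@[simp]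
theorem toRows₂LinearMap_apply (Z : Matrix (m ⊕ n) k R) : toRows₂LinearMap Z = Z.toRows₂ :=
  rfl

variable [Fintype l] [Fintype m] [Fintype n]

def sylvesterMap (M : Matrix l l R) (B : Matrix n n R) : Matrix l n R →ₗ[R] Matrix l n R :=
  mulLeftLinearMap n R M - mulRightLinearMap l R B

@[simp]
theorem sylvesterMap_apply (M : Matrix l l R) (B : Matrix n n R) (Z : Matrix l n R) :
    sylvesterMap M B Z = M * Z - Z * B :=
  rfl

theorem sylvesterMap_comp_mulLeftLinearMap {M M' S : Matrix l l R} (B : Matrix n n R)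
    (h : M * S = S * M') :
    sylvesterMap M B ∘ₗ mulLeftLinearMap n R S = mulLeftLinearMap n R S ∘ₗ sylvesterMap M' B := by
  refine LinearMap.ext fun Z => ?_
  simp only [LinearMap.comp_apply, sylvesterMap_apply, mulLeftLinearMap_apply, Matrix.mul_sub,
    ← Matrix.mul_assoc, h]

theorem finrank_ker_sylvesterMap_eq_of_mul_eq [DecidableEq l] {M M' S : Matrix l l R}
    (B : Matrix n n R) (hS : IsUnit S) (h : M * S = S * M') :
    finrank R (ker (sylvesterMap M B)) = finrank R (ker (sylvesterMap M' B)) := by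
  have hdet := (isUnit_iff_isUnit_det S).mp hS
  let e : Matrix l n R ≃ₗ[R] Matrix l n R :=
    .ofLinearMap (mulLeftLinearMap n R S) (mulLeftLinearMap n R S⁻¹)
      (by rw [← mulLeftLinearMap_mul, mul_nonsing_inv S hdet, mulLeftLinearMap_one])
      (by rw [← mulLeftLinearMap_mul, nonsing_inv_mul S hdet, mulLeftLinearMap_one])
  have hker : ker (sylvesterMap M' B) = (ker (sylvesterMap M B)).comap (e : _ →ₗ[R] _) := by
    have hcomp : sylvesterMap M B ∘ₗ e = (e : _ →ₗ[R] _) ∘ₗ sylvesterMap M' B :=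
      sylvesterMap_comp_mulLeftLinearMap B h
    rw [← ker_comp, hcomp, LinearEquiv.ker_comp]
  rw [hker, Submodule.comap_equiv_eq_map_symm, LinearEquiv.finrank_map_eq]

theorem mem_ker_sylvesterMap_fromBlocks {A : Matrix m m R} {B : Matrix n n R} {C : Matrix m n R}
    {Z : Matrix (m ⊕ n) n R} :
    Z ∈ ker (sylvesterMap (fromBlocks A C 0 B) B) ↔
      A * Z.toRows₁ + C * Z.toRows₂ = Z.toRows₁ * B ∧ B * Z.toRows₂ = Z.toRows₂ * B := by
  rw [mem_ker, sylvesterMap_apply, sub_eq_zero, ← fromRows_toRows Z, fromBlocks_mul_fromRows,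
    fromRows_mul, fromRows_ext_iff]
  simp

theorem ker_sylvesterMap_fromBlocks_inf_ker_toRows₂ (A : Matrix m m R) (B : Matrix n n R)
    (C : Matrix m n R) :
    ker (sylvesterMap (fromBlocks A C 0 B) B) ⊓ ker toRows₂LinearMap =
      ker (sylvesterMap (fromBlocks A 0 0 B) B) ⊓ ker toRows₂LinearMap := by
  ext Z
  simp only [Submodule.mem_inf, mem_ker_sylvesterMap_fromBlocks, mem_ker (f := toRows₂LinearMap),
    toRows₂LinearMap_apply]
  constructor <;> rintro ⟨⟨h₁, h₂⟩, h₃⟩ <;> simp_all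

theorem map_toRows₂_ker_sylvesterMap_fromBlocks_le (A : Matrix m m R) (B : Matrix n n R)
    (C : Matrix m n R) :
    (ker (sylvesterMap (fromBlocks A C 0 B) B)).map toRows₂LinearMap ≤ ker (sylvesterMap B B) := by
  rintro _ ⟨Z, hZ, rfl⟩
  rw [mem_ker, toRows₂LinearMap_apply, sylvesterMap_apply, sub_eq_zero]
  exact (mem_ker_sylvesterMap_fromBlocks.mp hZ).2

theorem map_toRows₂_ker_sylvesterMap_fromBlocks_zero (A : Matrix m m R) (B : Matrix n n R) :
    (ker (sylvesterMap (fromBlocks A 0 0 B) B)).map toRows₂LinearMap = ker (sylvesterMap B B) := by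
  refine (map_toRows₂_ker_sylvesterMap_fromBlocks_le A B 0).antisymm fun Y hY => ?_
  rw [mem_ker, sylvesterMap_apply, sub_eq_zero] at hY
  exact ⟨fromRows 0 Y, mem_ker_sylvesterMap_fromBlocks.mpr (by simpa using hY),
    toRows₂_fromRows 0 Y⟩

theorem inv_mul_fromBlocks_mul_eq_of_mul_sub_mul_eq [DecidableEq m] [DecidableEq n]
    {A : Matrix m m R} {B : Matrix n n R} {C X : Matrix m n R} (hX : A * X - X * B = C) :
    (fromBlocks 1 (-X) 0 1)⁻¹ * fromBlocks A C 0 B * fromBlocks 1 (-X) 0 1 =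
      fromBlocks A 0 0 B := by
  have hS : IsUnit (fromBlocks 1 (-X) 0 1 : Matrix (m ⊕ n) (m ⊕ n) R).det := by simp
  have hsemi : fromBlocks A C 0 B * fromBlocks 1 (-X) 0 1 =
      fromBlocks 1 (-X) 0 1 * fromBlocks A 0 0 B := by
    rw [fromBlocks_multiply, fromBlocks_multiply, ← hX]
    simp only [Matrix.mul_one, Matrix.one_mul, Matrix.mul_zero, Matrix.zero_mul, Matrix.mul_neg,
      Matrix.neg_mul, neg_zero, add_zero, zero_add]
    congr 1
    abel
  rw [Matrix.mul_assoc, hsemi, nonsing_inv_mul_cancel_left _ _ hS]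

end CommRing

section Field

variable {K : Type*} [Field K] {m n : Type*} [Fintype m] [Fintype n]

theorem map_toRows₂_ker_sylvesterMap_fromBlocks_eq_of_finrank_eq {A : Matrix m m K}
    {B : Matrix n n K} {C : Matrix m n K}
    (h : finrank K (ker (sylvesterMap (fromBlocks A C 0 B) B)) =
      finrank K (ker (sylvesterMap (fromBlocks A 0 0 B) B))) :
    (ker (sylvesterMap (fromBlocks A C 0 B) B)).map toRows₂LinearMap = ker (sylvesterMap B B) := by
  refine Submodule.eq_of_le_of_finrank_le (map_toRows₂_ker_sylvesterMap_fromBlocks_le A B C) ?_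
  have hC := Submodule.finrank_map_add_finrank_inf_ker toRows₂LinearMap
    (ker (sylvesterMap (fromBlocks A C 0 B) B))
  have h₀ := Submodule.finrank_map_add_finrank_inf_ker toRows₂LinearMap
    (ker (sylvesterMap (fromBlocks A 0 0 B) B))
  rw [ker_sylvesterMap_fromBlocks_inf_ker_toRows₂] at hC
  rw [map_toRows₂_ker_sylvesterMap_fromBlocks_zero] at h₀
  omega

end Field

end Matrix

theorem roth_theorem (F : Type*) [Field F] (m n : ℕ)
    (A : Matrix (Fin m) (Fin m) F) (B : Matrix (Fin n) (Fin n) F)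
    (C : Matrix (Fin m) (Fin n) F) :
    (∃ X : Matrix (Fin m) (Fin n) F, A * X - X * B = C) ↔
      ∃ S : Matrix (Fin m ⊕ Fin n) (Fin m ⊕ Fin n) F, IsUnit S ∧
        S⁻¹ * Matrix.fromBlocks A C 0 B * S = Matrix.fromBlocks A 0 0 B := by
  constructor
  · rintro ⟨X, hX⟩
    exact ⟨fromBlocks 1 (-X) 0 1, by simp, inv_mul_fromBlocks_mul_eq_of_mul_sub_mul_eq hX⟩
  · rintro ⟨S, hS, hsim⟩
    have hsemi : fromBlocks A C 0 B * S = S * fromBlocks A 0 0 B := by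
      rw [← hsim, Matrix.mul_assoc,
        mul_nonsing_inv_cancel_left _ _ ((isUnit_iff_isUnit_det S).mp hS)]
    have hproj := map_toRows₂_ker_sylvesterMap_fromBlocks_eq_of_finrank_eq
      (finrank_ker_sylvesterMap_eq_of_mul_eq B hS hsemi)
    obtain ⟨Z, hZ, hY⟩ : (-1 : Matrix (Fin n) (Fin n) F) ∈
        (ker (sylvesterMap (fromBlocks A C 0 B) B)).map toRows₂LinearMap :=
      hproj ▸ by simp
    have hX := (mem_ker_sylvesterMap_fromBlocks.mp hZ).1
    rw [← toRows₂LinearMap_apply, hY, Matrix.mul_neg, Matrix.mul_one] at hX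
    exact ⟨Z.toRows₁, by rw [← hX]; abel⟩
end

section
/- Lyapunov's theorem: If A is an n×n complex matrix all of whose eigenvalues have negative real part, then for every positive definite Hermitian matrix P there exists a unique Hermitian solution X of AX + XA* = −P, and this X is positive definite. -/
/-!
The Sylvester operator `X ↦ A X + X Aᴴ` is injective because `σ(A)` and `σ(-Aᴴ)` lie in opposite
open half-planes: if `A X = X (-Aᴴ)` then `X χ_A(-Aᴴ) = χ_A(A) X = 0`, and `χ_A(-Aᴴ)` is invertible
by the spectral mapping theorem. Being an injective endomorphism of a finite-dimensional space it is
bijective, and the solution is Hermitian because its conjugate transpose solves the same equation.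

For positivity, pass to the Cayley transform `C = (1 + A)(1 - A)⁻¹`, whose spectrum lies in the open
unit disc, so that `C ^ k → 0` by Gelfand's formula. The Lyapunov equation becomes the Stein
equation `X - C X Cᴴ = 2 (1 - A)⁻¹ P (1 - A)⁻ᴴ > 0`; telescoping shows `X - Cᵏ X Cᵏᴴ ≥ 0`, so
`X ≥ 0` in the limit, and then `X = (X - C X Cᴴ) + C X Cᴴ > 0`.
-/

open Filter Polynomial Topology
open scoped ComplexOrder

theorem Polynomial.aeval_mul_eq_mul_aeval {R S : Type*} [CommSemiring R] [Semiring S]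
    [Algebra R S] {a b x : S} (h : a * x = x * b) (p : R[X]) :
    aeval a p * x = x * aeval b p := by
  induction p using Polynomial.induction_on' with
  | add p q hp hq => rw [map_add, map_add, add_mul, mul_add, hp, hq]
  | monomial k c =>
    have hk : a ^ k * x = x * b ^ k := (SemiconjBy.pow_right h.symm k).symm
    simp only [aeval_monomial, mul_assoc, hk]
    rw [← mul_assoc, ← mul_assoc, Algebra.commutes]

theorem tendsto_pow_atTop_nhds_zero_of_spectralRadius_lt_one {A : Type*} [NormedRing A]
    [NormedAlgebra ℂ A] [CompleteSpace A] {a : A} (ha : spectralRadius ℂ a < 1) :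
    Tendsto (a ^ ·) atTop (𝓝 0) := by
  obtain ⟨r, hρr, hr1⟩ := ENNReal.lt_iff_exists_nnreal_btwn.mp ha
  have hgelfand := spectrum.pow_nnnorm_pow_one_div_tendsto_nhds_spectralRadius a
  have hbound : ∀ᶠ k : ℕ in atTop, ‖a ^ k‖₊ ≤ r ^ k := by
    filter_upwards [hgelfand.eventually_lt_const hρr, eventually_gt_atTop 0] with k hk hk0
    rw [one_div, ENNReal.rpow_inv_lt_iff (by positivity), ENNReal.rpow_natCast] at hk
    exact_mod_cast hk.le
  exact squeeze_zero_norm' (hbound.mono fun k hk => NNReal.coe_le_coe.mpr hk)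
    (tendsto_pow_atTop_nhds_zero_of_lt_one r.2 (by exact_mod_cast hr1))

theorem Complex.norm_lt_one_of_re_sub_one_div_add_one_neg {μ : ℂ}
    (h : ((μ - 1) / (μ + 1)).re < 0) : ‖μ‖ < 1 := by
  have hnum : (μ - 1).re * (μ + 1).re + (μ - 1).im * (μ + 1).im = normSq μ - 1 := by
    simp only [sub_re, add_re, sub_im, add_im, one_re, one_im, normSq_apply]
    ring
  rw [div_re, ← add_div, hnum] at h
  have hsq : normSq μ < 1 := by
    by_contra! hge
    exact h.not_ge (div_nonneg (sub_nonneg.mpr hge) (normSq_nonneg _))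
  rw [← Complex.sq_norm] at hsq
  nlinarith [norm_nonneg μ]

namespace Matrix

variable {n : Type*} [Fintype n] [DecidableEq n]

theorem mem_spectrum_iff_exists_mulVec_eq_smul {K : Type*} [Field K] {A : Matrix n n K} {μ : K} :
    μ ∈ spectrum K A ↔ ∃ v ≠ 0, A *ᵥ v = μ • v := by
  rw [← spectrum_toLin', ← Module.End.hasEigenvalue_iff_mem_spectrum,
    Module.End.hasEigenvalue_iff, Submodule.ne_bot_iff]
  simp only [Module.End.mem_eigenspace_iff, toLin'_apply, and_comm]

theorem eq_zero_of_mul_eq_mul_of_disjoint_spectrum {K : Type*} [Field K] [IsAlgClosed K]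
    {A B X : Matrix n n K} (hAB : Disjoint (spectrum K A) (spectrum K B)) (h : A * X = X * B) :
    X = 0 := by
  nontriviality Matrix n n K
  have hX : X * aeval B A.charpoly = 0 := by
    rw [← aeval_mul_eq_mul_aeval h, aeval_self_charpoly, zero_mul]
  have hunit : IsUnit (aeval B A.charpoly) := by
    rw [← spectrum.zero_notMem_iff K, spectrum.map_polynomial_aeval_of_nonempty _ _
      (spectrum.nonempty_of_isAlgClosed_of_finiteDimensional K B)]
    rintro ⟨μ, hμB, hμ⟩
    exact hAB.ne_of_mem (mem_spectrum_of_isRoot_charpoly hμ) hμB rfl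
  exact hunit.mul_left_eq_zero.mp hX

section Lyapunov

variable {R : Type*} [CommRing R] [StarRing R]

def lyapunovMap (A : Matrix n n R) : Matrix n n R →ₗ[R] Matrix n n R :=
  LinearMap.mulLeft R A + LinearMap.mulRight R Aᴴ

@[simp]
theorem lyapunovMap_apply (A X : Matrix n n R) : lyapunovMap A X = A * X + X * Aᴴ := rfl

theorem lyapunovMap_conjTranspose (A X : Matrix n n R) :
    lyapunovMap A Xᴴ = (lyapunovMap A X)ᴴ := by
  simp [conjTranspose_mul, add_comm]

/-- The Cayley transform `(1 + A) (1 - A)⁻¹`, to which this is equal when `1 - A` is invertible. -/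
noncomputable def cayley (A : Matrix n n R) : Matrix n n R :=
  2 • (1 - A)⁻¹ - 1

theorem sub_cayley_mul_mul_conjTranspose {A : Matrix n n R} (hA : IsUnit (1 - A))
    (X : Matrix n n R) :
    X - cayley A * X * (cayley A)ᴴ = -(2 • ((1 - A)⁻¹ * lyapunovMap A X * ((1 - A)⁻¹)ᴴ)) := by
  rw [cayley]
  set N := 1 - A
  have hNN : N⁻¹ * N = 1 := nonsing_inv_mul N ((isUnit_iff_isUnit_det N).mp hA)
  have hAN : A = 1 - N := (sub_sub_cancel 1 A).symm
  have hexpand : N⁻¹ * lyapunovMap A X * (N⁻¹)ᴴ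
      = 2 • (N⁻¹ * X * (N⁻¹)ᴴ) - (N⁻¹ * N) * X * (N⁻¹)ᴴ - N⁻¹ * X * (N⁻¹ * N)ᴴ := by
    rw [lyapunovMap_apply, hAN, conjTranspose_mul]
    simp only [conjTranspose_sub, conjTranspose_one]
    noncomm_ring
  rw [hexpand, hNN, conjTranspose_one]
  simp only [conjTranspose_sub, conjTranspose_nsmul, conjTranspose_one]
  noncomm_ring

end Lyapunov

theorem lyapunovMap_bijective {A : Matrix n n ℂ} (hA : ∀ μ ∈ spectrum ℂ A, μ.re < 0) :
    Function.Bijective (lyapunovMap A) := by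
  have hinj : Function.Injective (lyapunovMap A) := by
    rw [← LinearMap.ker_eq_bot, LinearMap.ker_eq_bot']
    intro X hX
    refine eq_zero_of_mul_eq_mul_of_disjoint_spectrum (A := A) (B := -Aᴴ) ?_ ?_
    · refine Set.disjoint_left.mpr fun μ hμA hμB => ?_
      rw [← star_eq_conjTranspose, ← spectrum.neg_eq, spectrum.map_star] at hμB
      have := hA _ hμB
      simp only [star_neg, RCLike.star_def, Complex.neg_re, Complex.conj_re, Left.neg_neg_iff]
        at this
      linarith [hA μ hμA]
    · rw [mul_neg, eq_neg_iff_add_eq_zero]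
      exact hX
  exact ⟨hinj, LinearMap.injective_iff_surjective.mp hinj⟩

theorem isUnit_one_sub_of_forall_re_neg {A : Matrix n n ℂ}
    (hA : ∀ μ ∈ spectrum ℂ A, μ.re < 0) : IsUnit (1 - A) := by
  simpa using spectrum.notMem_iff.mp fun h1 => (hA 1 h1).not_ge zero_le_one

theorem spectrum_cayley_subset_ball {A : Matrix n n ℂ} (hA : ∀ μ ∈ spectrum ℂ A, μ.re < 0) :
    spectrum ℂ (cayley A) ⊆ Metric.ball 0 1 := by
  intro μ hμ
  obtain ⟨v, hv0, hCv⟩ := mem_spectrum_iff_exists_mulVec_eq_smul.mp hμ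
  have hN := (isUnit_iff_isUnit_det _).mp (isUnit_one_sub_of_forall_re_neg hA)
  set w := (1 - A)⁻¹ *ᵥ v
  have hNw : (1 - A) *ᵥ w = v := by rw [mulVec_mulVec, mul_nonsing_inv _ hN, one_mulVec]
  have hw : (2 : ℂ) • w = (μ + 1) • v := by
    rw [add_smul, one_smul, ← hCv, cayley, sub_mulVec, one_mulVec, sub_add_cancel, two_smul,
      two_smul, add_mulVec]
  have hμ1 : μ + 1 ≠ 0 := by
    rintro h0
    rw [h0, zero_smul, smul_eq_zero] at hw
    exact hv0 (by rw [← hNw, hw.resolve_left two_ne_zero, mulVec_zero])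
  have hw0 : w ≠ 0 := by
    rintro h0
    exact hv0 (by rw [← hNw, h0, mulVec_zero])
  have hv : v = (2 / (μ + 1)) • w := by
    rw [div_eq_inv_mul, mul_smul, hw, smul_smul, inv_mul_cancel₀ hμ1, one_smul]
  have hAw : A *ᵥ w = ((μ - 1) / (μ + 1)) • w := by
    have hAw' : A *ᵥ w = w - v := by rw [← hNw, sub_mulVec, one_mulVec, sub_sub_cancel]
    have hscalar : (μ - 1) / (μ + 1) = 1 - 2 / (μ + 1) := by
      field_simp
      ring
    rw [hAw', hv, hscalar, sub_smul, one_smul]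
  simpa using Complex.norm_lt_one_of_re_sub_one_div_add_one_neg
    (hA _ (mem_spectrum_iff_exists_mulVec_eq_smul.mpr ⟨w, hw0, hAw⟩))

section PowersTendstoZero

attribute [local instance] Matrix.linftyOpNormedRing Matrix.linftyOpNormedAlgebra

theorem tendsto_pow_atTop_nhds_zero_of_spectrum_subset_ball {C : Matrix n n ℂ}
    (hC : spectrum ℂ C ⊆ Metric.ball 0 1) : Tendsto (C ^ ·) atTop (𝓝 0) := by
  refine tendsto_pow_atTop_nhds_zero_of_spectralRadius_lt_one ?_
  rcases (spectrum ℂ C).eq_empty_or_nonempty with h | h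
  · simp [spectralRadius, h]
  · exact_mod_cast spectrum.spectralRadius_lt_of_forall_lt_of_nonempty h
      fun μ hμ => by simpa [← NNReal.coe_lt_coe] using hC hμ

end PowersTendstoZero

section Stein

variable {𝕜 : Type*} [RCLike 𝕜] {C X : Matrix n n 𝕜}

theorem posSemidef_sub_pow_mul_mul_conjTranspose (h : (X - C * X * Cᴴ).PosSemidef) (k : ℕ) :
    (X - C ^ k * X * (C ^ k)ᴴ).PosSemidef := by
  induction k with
  | zero => simpa using PosSemidef.zero
  | succ k ih =>
    have hsplit : X - C ^ (k + 1) * X * (C ^ (k + 1))ᴴ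
        = (X - C ^ k * X * (C ^ k)ᴴ) + C ^ k * (X - C * X * Cᴴ) * (C ^ k)ᴴ := by
      rw [pow_succ, conjTranspose_mul]
      noncomm_ring
    rw [hsplit]
    exact ih.add (h.mul_mul_conjTranspose_same _)

theorem PosSemidef.of_posSemidef_sub_mul_mul_conjTranspose (hC : Tendsto (C ^ ·) atTop (𝓝 0))
    (hX : X.IsHermitian) (h : (X - C * X * Cᴴ).PosSemidef) : X.PosSemidef := by
  refine PosSemidef.of_dotProduct_mulVec_nonneg hX fun x => ?_
  have hlim : Tendsto (fun k : ℕ => star x ⬝ᵥ (X - C ^ k * X * (C ^ k)ᴴ) *ᵥ x) atTop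
      (𝓝 (star x ⬝ᵥ X *ᵥ x)) := by
    have hcont : Continuous fun M : Matrix n n 𝕜 => star x ⬝ᵥ (X - M * X * Mᴴ) *ᵥ x := by
      fun_prop
    simpa only [Function.comp_def, zero_mul, conjTranspose_zero, mul_zero, sub_zero] using
      (hcont.tendsto 0).comp hC
  exact ge_of_tendsto' hlim fun k =>
    (posSemidef_sub_pow_mul_mul_conjTranspose h k).dotProduct_mulVec_nonneg x

theorem PosDef.of_posDef_sub_mul_mul_conjTranspose (hC : Tendsto (C ^ ·) atTop (𝓝 0))
    (hX : X.IsHermitian) (h : (X - C * X * Cᴴ).PosDef) : X.PosDef := by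
  have hpsd := PosSemidef.of_posSemidef_sub_mul_mul_conjTranspose hC hX h.posSemidef
  simpa using h.add_posSemidef (hpsd.mul_mul_conjTranspose_same C)

end Stein

theorem PosDef.of_lyapunovMap_eq_neg {A X P : Matrix n n ℂ} (hA : ∀ μ ∈ spectrum ℂ A, μ.re < 0)
    (hP : P.PosDef) (hX : X.IsHermitian) (hXP : lyapunovMap A X = -P) : X.PosDef := by
  refine PosDef.of_posDef_sub_mul_mul_conjTranspose
    (tendsto_pow_atTop_nhds_zero_of_spectrum_subset_ball (spectrum_cayley_subset_ball hA)) hX ?_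
  have hN := isUnit_one_sub_of_forall_re_neg hA
  have hMPM := hP.mul_mul_conjTranspose_same
    (vecMul_injective_of_isUnit (isUnit_nonsing_inv_iff.mpr hN))
  rw [sub_cayley_mul_mul_conjTranspose hN, hXP, mul_neg, neg_mul, smul_neg, neg_neg, two_nsmul]
  exact hMPM.add hMPM

end Matrix

open Matrix in
theorem lyapunov_theorem (n : ℕ) (A : Matrix (Fin n) (Fin n) ℂ)
    (hA : ∀ μ ∈ spectrum ℂ A, μ.re < 0)
    (P : Matrix (Fin n) (Fin n) ℂ) (hP : P.PosDef) :
    (∃! X : Matrix (Fin n) (Fin n) ℂ, X.IsHermitian ∧ A * X + X * A.conjTranspose = -P) ∧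
    ∀ X : Matrix (Fin n) (Fin n) ℂ, X.IsHermitian → A * X + X * A.conjTranspose = -P →
      X.PosDef := by
  have hL := lyapunovMap_bijective hA
  obtain ⟨X₀, hX₀⟩ := hL.surjective (-P)
  have hX₀herm : X₀.IsHermitian :=
    hL.injective <| by rw [lyapunovMap_conjTranspose, hX₀, conjTranspose_neg, hP.isHermitian.eq]
  exact ⟨⟨X₀, ⟨hX₀herm, hX₀⟩, fun Y hY => hL.injective (hY.2.trans hX₀.symm)⟩,
    fun X hX hXP => PosDef.of_lyapunovMap_eq_neg hA hP hX hXP⟩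
end

section
/- Cauchy interlacing theorem: If A is an n×n Hermitian matrix and B is an (n−1)×(n−1) principal submatrix of A, then the eigenvalues of B interlace those of A: λ_{k}(A) ≤ λ_k(B) ≤ λ_{k+1}(A) for 1 ≤ k ≤ n−1, where eigenvalues are arranged in increasing order. -/
/-!
If the form `x ↦ re ⟪A x, x⟫` is at most `a ‖x‖²` on a subspace `V` and at least `b ‖x‖²` on a
subspace `W` with `dim V + dim W` exceeding the dimension of the space, a nonzero vector of `V ⊓ W`
gives `b ≤ a`. The span of the eigenvectors belonging to the `k + 1` smallest eigenvalues of a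
Hermitian matrix carries the upper bound `λₖ`, the span of the others the lower bound `λₖ`.
Extending vectors by zero turns the form of a principal submatrix `B` isometrically into that of
`A`, so pairing such subspaces for `B` and for `A` of complementary sizes gives
`λₖ(A) ≤ λₖ(B)` and `λₖ(B) ≤ λₖ₊₁(A)`.
-/

open Module Submodule Matrix RCLike
open scoped InnerProductSpace ComplexConjugate

theorem Submodule.exists_mem_inf_ne_zero_of_finrank_lt_add {K V : Type*} [DivisionRing K]
    [AddCommGroup V] [Module K V] [FiniteDimensional K V] {p q : Submodule K V}
    (h : finrank K V < finrank K p + finrank K q) : ∃ x ∈ p ⊓ q, x ≠ 0 := by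
  refine exists_mem_ne_zero_of_ne_bot fun hpq => ?_
  have := finrank_sup_add_finrank_inf_eq p q
  rw [hpq, finrank_bot] at this
  have := (p ⊔ q).finrank_le
  omega

variable {𝕜 : Type*} [RCLike 𝕜]

namespace LinearMap

variable {E : Type*} [NormedAddCommGroup E] [InnerProductSpace 𝕜 E] {T : E →ₗ[𝕜] E}

theorem le_of_finrank_lt_add_of_re_inner_le [FiniteDimensional 𝕜 E] {V W : Submodule 𝕜 E}
    (hdim : finrank 𝕜 E < finrank 𝕜 V + finrank 𝕜 W) {a b : ℝ}
    (hV : ∀ x ∈ V, re ⟪T x, x⟫_𝕜 ≤ a * ‖x‖ ^ 2) (hW : ∀ x ∈ W, b * ‖x‖ ^ 2 ≤ re ⟪T x, x⟫_𝕜) :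
    b ≤ a := by
  obtain ⟨x, ⟨hxV, hxW⟩, hx⟩ := exists_mem_inf_ne_zero_of_finrank_lt_add hdim
  have hpos : 0 < ‖x‖ ^ 2 := by positivity
  exact le_of_mul_le_mul_right ((hW x hxW).trans (hV x hxV)) hpos

variable {ι : Type*} [Fintype ι] {v : ι → E} {μ : ι → ℝ}

theorem exists_re_inner_eq_sum_of_mem_span (hv : Orthonormal 𝕜 v)
    (hT : ∀ j, T (v j) = (μ j : 𝕜) • v j) {x : E} (hx : x ∈ span 𝕜 (Set.range v)) :
    ∃ c : ι → 𝕜, re ⟪T x, x⟫_𝕜 = ∑ j, μ j * ‖c j‖ ^ 2 ∧ ‖x‖ ^ 2 = ∑ j, ‖c j‖ ^ 2 := by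
  obtain ⟨c, rfl⟩ := mem_span_range_iff_exists_fun 𝕜 |>.mp hx
  have hTx : T (∑ j, c j • v j) = ∑ j, (c j * μ j) • v j := by
    simp [map_sum, hT, smul_smul]
  have hconj : ∀ a : 𝕜, conj a * a = ((‖a‖ ^ 2 : ℝ) : 𝕜) := fun a => by
    rw [mul_comm, RCLike.mul_conj]; norm_cast
  refine ⟨c, ?_, ?_⟩
  · have : ∀ j, conj (c j * μ j) * c j = ((μ j * ‖c j‖ ^ 2 : ℝ) : 𝕜) := fun j => by
      rw [map_mul, conj_ofReal, mul_right_comm, hconj]; push_cast; ring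
    rw [hTx, hv.inner_sum]
    simp only [this, ← ofReal_sum, ofReal_re]
  · rw [← inner_self_eq_norm_sq (𝕜 := 𝕜), hv.inner_sum]
    simp only [hconj, ← ofReal_sum, ofReal_re]

theorem re_inner_le_of_mem_span (hv : Orthonormal 𝕜 v) (hT : ∀ j, T (v j) = (μ j : 𝕜) • v j)
    {a : ℝ} (ha : ∀ j, μ j ≤ a) {x : E} (hx : x ∈ span 𝕜 (Set.range v)) :
    re ⟪T x, x⟫_𝕜 ≤ a * ‖x‖ ^ 2 := by
  obtain ⟨c, hTx, hx⟩ := exists_re_inner_eq_sum_of_mem_span hv hT hx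
  rw [hTx, hx, Finset.mul_sum]
  gcongr with j
  exact ha j

theorem le_re_inner_of_mem_span (hv : Orthonormal 𝕜 v) (hT : ∀ j, T (v j) = (μ j : 𝕜) • v j)
    {b : ℝ} (hb : ∀ j, b ≤ μ j) {x : E} (hx : x ∈ span 𝕜 (Set.range v)) :
    b * ‖x‖ ^ 2 ≤ re ⟪T x, x⟫_𝕜 := by
  obtain ⟨c, hTx, hx⟩ := exists_re_inner_eq_sum_of_mem_span hv hT hx
  rw [hTx, hx, Finset.mul_sum]
  gcongr with j
  exact hb j

end LinearMap

namespace Matrix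

variable {l n : Type*} [Fintype l] [Fintype n] [DecidableEq l] [DecidableEq n]

theorem inner_toEuclideanLin_conjTranspose_mul_mul (P : Matrix n l 𝕜) (A : Matrix n n 𝕜)
    (x y : EuclideanSpace 𝕜 l) :
    ⟪toEuclideanLin (Pᴴ * A * P) x, y⟫_𝕜 =
      ⟪toEuclideanLin A (toEuclideanLin P x), toEuclideanLin P y⟫_𝕜 := by
  have hadj : toLpLin 2 2 Pᴴ = LinearMap.adjoint (toEuclideanLin P) :=
    toEuclideanLin_conjTranspose_eq_adjoint P
  rw [toLpLin_mul 2 2 2, toLpLin_mul 2 2 2, hadj]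
  simp only [LinearMap.comp_apply]
  exact LinearMap.adjoint_inner_left _ _ _

omit [Fintype l] [DecidableEq l] in
theorem conjTranspose_submatrix_one_mul_mul (e : l ↪ n) (A : Matrix n n 𝕜) :
    ((1 : Matrix n n 𝕜).submatrix id e)ᴴ * A * (1 : Matrix n n 𝕜).submatrix id e =
      A.submatrix e e := by
  ext i j
  simp [Matrix.mul_apply, Matrix.one_apply]

noncomputable def extendByZero (e : l ↪ n) : EuclideanSpace 𝕜 l →ₗᵢ[𝕜] EuclideanSpace 𝕜 n where
  toLinearMap := toEuclideanLin ((1 : Matrix n n 𝕜).submatrix id e)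
  norm_map' x := by
    have h := inner_toEuclideanLin_conjTranspose_mul_mul ((1 : Matrix n n 𝕜).submatrix id e) 1 x x
    rw [conjTranspose_submatrix_one_mul_mul, submatrix_one_embedding] at h
    simp only [toEuclideanLin, toLpLin_one, LinearMap.id_apply, inner_self_eq_norm_sq_to_K] at h
    exact (sq_eq_sq₀ (norm_nonneg _) (norm_nonneg _)).mp (by exact_mod_cast h.symm)

theorem inner_toEuclideanLin_submatrix (A : Matrix n n 𝕜) (e : l ↪ n) (x y : EuclideanSpace 𝕜 l) :
    ⟪toEuclideanLin (A.submatrix e e) x, y⟫_𝕜 =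
      ⟪toEuclideanLin A (extendByZero e x), extendByZero e y⟫_𝕜 := by
  rw [← conjTranspose_submatrix_one_mul_mul]
  exact inner_toEuclideanLin_conjTranspose_mul_mul _ _ _ _

namespace IsHermitian

theorem toEuclideanLin_eigenvectorBasis {A : Matrix n n 𝕜} (hA : A.IsHermitian) (j : n) :
    toEuclideanLin A (hA.eigenvectorBasis j) = (hA.eigenvalues j : 𝕜) • hA.eigenvectorBasis j := by
  apply WithLp.ofLp_injective
  rw [toLpLin_apply, hA.mulVec_eigenvectorBasis, RCLike.real_smul_eq_coe_smul (K := 𝕜)]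
  rfl

variable {m : ℕ} {A : Matrix (Fin m) (Fin m) 𝕜}

noncomputable abbrev sortedEigenvalues (hA : A.IsHermitian) : Fin m → ℝ :=
  hA.eigenvalues ∘ Tuple.sort hA.eigenvalues

theorem exists_finrank_eq_forall_re_inner_le (hA : A.IsHermitian) (k : Fin m) :
    ∃ V : Submodule 𝕜 (EuclideanSpace 𝕜 (Fin m)), finrank 𝕜 V = k + 1 ∧
      ∀ x ∈ V, re ⟪toEuclideanLin A x, x⟫_𝕜 ≤ hA.sortedEigenvalues k * ‖x‖ ^ 2 := by
  let v : Finset.Iic k → EuclideanSpace 𝕜 (Fin m) :=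
    fun j => hA.eigenvectorBasis (Tuple.sort hA.eigenvalues j)
  have hv : Orthonormal 𝕜 v := hA.eigenvectorBasis.orthonormal.comp _
    ((Tuple.sort hA.eigenvalues).injective.comp Subtype.val_injective)
  refine ⟨span 𝕜 (Set.range v), ?_, fun x hx => LinearMap.re_inner_le_of_mem_span hv
    (fun j => hA.toEuclideanLin_eigenvectorBasis _)
    (fun j => Tuple.monotone_sort hA.eigenvalues (Finset.mem_Iic.mp j.2)) hx⟩
  rw [finrank_span_eq_card hv.linearIndependent, Fintype.card_coe, Fin.card_Iic]

theorem exists_finrank_eq_forall_le_re_inner (hA : A.IsHermitian) (k : Fin m) :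
    ∃ W : Submodule 𝕜 (EuclideanSpace 𝕜 (Fin m)), finrank 𝕜 W = m - k ∧
      ∀ x ∈ W, hA.sortedEigenvalues k * ‖x‖ ^ 2 ≤ re ⟪toEuclideanLin A x, x⟫_𝕜 := by
  let v : Finset.Ici k → EuclideanSpace 𝕜 (Fin m) :=
    fun j => hA.eigenvectorBasis (Tuple.sort hA.eigenvalues j)
  have hv : Orthonormal 𝕜 v := hA.eigenvectorBasis.orthonormal.comp _
    ((Tuple.sort hA.eigenvalues).injective.comp Subtype.val_injective)
  refine ⟨span 𝕜 (Set.range v), ?_, fun x hx => LinearMap.le_re_inner_of_mem_span hv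
    (fun j => hA.toEuclideanLin_eigenvectorBasis _)
    (fun j => Tuple.monotone_sort hA.eigenvalues (Finset.mem_Ici.mp j.2)) hx⟩
  rw [finrank_span_eq_card hv.linearIndependent, Fintype.card_coe, Fin.card_Ici]

end IsHermitian

end Matrix

theorem cauchy_interlacing (n : ℕ) (A : Matrix (Fin (n + 1)) (Fin (n + 1)) ℂ)
    (hA : A.IsHermitian) (i : Fin (n + 1))
    (hB : (A.submatrix i.succAbove i.succAbove).IsHermitian) :
    ∀ k : Fin n,
      (hA.eigenvalues ∘ Tuple.sort hA.eigenvalues) k.castSucc ≤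
        (hB.eigenvalues ∘ Tuple.sort hB.eigenvalues) k ∧
      (hB.eigenvalues ∘ Tuple.sort hB.eigenvalues) k ≤
        (hA.eigenvalues ∘ Tuple.sort hA.eigenvalues) k.succ := by
  intro k
  let ι := extendByZero (𝕜 := ℂ) (Fin.succAboveEmb i)
  have hBA (y : EuclideanSpace ℂ (Fin n)) :
      ⟪toEuclideanLin (A.submatrix i.succAbove i.succAbove) y, y⟫_ℂ =
        ⟪toEuclideanLin A (ι y), ι y⟫_ℂ :=
    inner_toEuclideanLin_submatrix A (Fin.succAboveEmb i) y y
  have hdim (V : Submodule ℂ (EuclideanSpace ℂ (Fin n))) :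
      finrank ℂ (V.map ι.toLinearMap) = finrank ℂ V :=
    (V.equivMapOfInjective _ ι.injective).finrank_eq.symm
  constructor
  · obtain ⟨V, hVdim, hV⟩ := hB.exists_finrank_eq_forall_re_inner_le k
    obtain ⟨W, hWdim, hW⟩ := hA.exists_finrank_eq_forall_le_re_inner k.castSucc
    refine LinearMap.le_of_finrank_lt_add_of_re_inner_le (V := V.map ι.toLinearMap) ?_ ?_ hW
    · rw [hdim, hVdim, hWdim, finrank_euclideanSpace_fin]
      simp only [Fin.val_castSucc]
      omega
    · rintro _ ⟨y, hy, rfl⟩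
      simpa [hBA, ι.norm_map] using hV y hy
  · obtain ⟨V, hVdim, hV⟩ := hA.exists_finrank_eq_forall_re_inner_le k.succ
    obtain ⟨W, hWdim, hW⟩ := hB.exists_finrank_eq_forall_le_re_inner k
    refine LinearMap.le_of_finrank_lt_add_of_re_inner_le (W := W.map ι.toLinearMap) ?_ hV ?_
    · rw [hdim, hVdim, hWdim, finrank_euclideanSpace_fin]
      simp only [Fin.val_succ]
      omega
    · rintro _ ⟨y, hy, rfl⟩
      simpa [hBA, ι.norm_map] using hW y hy
end

section
/- Hardy–Littlewood–Pólya theorem: For x, y ∈ ℝⁿ, x is majorized by y if and only if x = Dy for some n×n doubly stochastic matrix D. -/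
/-!
Both directions compare `x` and `y` through linear functionals `v ↦ ∑ c i * v i`.

If `x = D y` with `D` doubly stochastic, a sum of `k` entries of `x` is `∑ c j * y j` with weights
`0 ≤ c j ≤ 1` of total `k`, and such a weighted sum is at most the sum of the `k` largest entries
of `y` (pour the weight onto the largest entries).

Conversely, the vectors `D y` form a compact convex set (the image of the Birkhoff polytope).
If `x` were outside it, some functional `c` would separate them. But by the rearrangement
inequality `∑ c i * x i` is at most the pairing of the sorted `c` with the sorted `x`, and by Abel
summation against the increasing sorted `c`, majorization bounds this by the pairing of the sorted
`c` with the sorted `y`, which is `∑ c i * y (π i)` for a permutation `π`; and `y ∘ π` is `P y` for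
the permutation matrix `P`.
-/

/-- The sum of the `k` largest entries of `x`. -/
noncomputable def kLargestSum {n : ℕ} (x : Fin n → ℝ) (k : ℕ) : ℝ :=
  ∑ i ∈ Finset.univ.filter (fun i : Fin n => n - k ≤ (i : ℕ)), (x ∘ Tuple.sort x) i

/-- `x` is majorized by `y`. -/
noncomputable def Majorizes {n : ℕ} (x y : Fin n → ℝ) : Prop :=
  (∀ k, k ≤ n → kLargestSum x k ≤ kLargestSum y k) ∧ ∑ i, x i = ∑ i, y i

open Finset Matrix

theorem sum_mul_le_sum_of_sum_eq_card {ι : Type*} [Fintype ι] {w d : ι → ℝ} {T : Finset ι}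
    (hw : ∀ i ∈ T, ∀ j ∉ T, w j ≤ w i) (hd₀ : ∀ i, 0 ≤ d i) (hd₁ : ∀ i, d i ≤ 1)
    (hd : ∑ i, d i = #T) : ∑ i, d i * w i ≤ ∑ i ∈ T, w i := by
  classical
  rcases T.eq_empty_or_nonempty with rfl | hT
  · have : ∀ i, d i = 0 := by simpa [sum_eq_zero_iff_of_nonneg fun i _ => hd₀ i] using hd
    simp [this]
  -- `t = min_T w` separates the values of `w` on `T` from those off `T`.
  set t := T.inf' hT w
  have hterm : ∀ i, d i * (w i - t) ≤ if i ∈ T then w i - t else 0 := by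
    intro i
    split_ifs with hi
    · nlinarith [hd₁ i, T.inf'_le w hi]
    · obtain ⟨j, hj, hjt⟩ := T.exists_mem_eq_inf' hT w
      nlinarith [hd₀ i, hw j hj i hi]
  calc ∑ i, d i * w i = ∑ i, d i * (w i - t) + #T * t := by
        rw [← hd, sum_mul, ← sum_add_distrib]; simp only [mul_sub, sub_add_cancel]
    _ ≤ ∑ i ∈ T, (w i - t) + #T * t := by
        grw [sum_le_sum fun i _ => hterm i, sum_ite_mem_eq]
    _ = ∑ i ∈ T, w i := by simp [sum_sub_distrib]

theorem sum_mul_nonneg_of_tail_sums_nonneg {n : ℕ} {u e : Fin n → ℝ} (hu : Monotone u)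
    (hu₀ : ∀ i, 0 ≤ u i) (he : ∀ m : ℕ, 0 ≤ ∑ i : Fin n with m ≤ i.val, e i) :
    0 ≤ ∑ i, u i * e i := by
  induction n with
  | zero => simp
  | succ n ih =>
    have htail (m : ℕ) : ∑ i : Fin n with m ≤ i.val, e i.succ =
        ∑ i : Fin (n + 1) with m + 1 ≤ i.val, e i := by
      rw [sum_filter, sum_filter, Fin.sum_univ_succ]
      simp
    -- Shifting the remaining weights by `u 0` keeps them monotone and nonnegative.
    have hsplit : ∑ i, u i * e i = u 0 * ∑ i, e i + ∑ i : Fin n, (u i.succ - u 0) * e i.succ := by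
      rw [Fin.sum_univ_succ, Fin.sum_univ_succ e]
      simp only [sub_mul, sum_sub_distrib, ← mul_sum]
      ring
    rw [hsplit]
    refine add_nonneg (mul_nonneg (hu₀ 0) (by simpa using he 0)) (ih ?_ ?_ ?_)
    · exact fun i j hij => sub_le_sub_right (hu (Fin.succ_le_succ_iff.2 hij)) _
    · exact fun i => sub_nonneg.2 (hu (Fin.zero_le _))
    · exact fun m => htail m ▸ he (m + 1)

theorem sum_mul_le_sum_mul_of_tail_sums_le {n : ℕ} {u a b : Fin n → ℝ} (hu : Monotone u)
    (htail : ∀ m : ℕ, ∑ i : Fin n with m ≤ i.val, a i ≤ ∑ i : Fin n with m ≤ i.val, b i)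
    (htot : ∑ i, a i = ∑ i, b i) : ∑ i, u i * a i ≤ ∑ i, u i * b i := by
  cases n with
  | zero => simp
  | succ n =>
    have key := sum_mul_nonneg_of_tail_sums_nonneg (u := fun i => u i - u 0) (e := b - a)
      (fun i j hij => sub_le_sub_right (hu hij) _) (fun i => sub_nonneg.2 (hu (Fin.zero_le i)))
      (fun m => by simpa [sum_sub_distrib] using htail m)
    simp only [Pi.sub_apply, sub_mul, mul_sub, sum_sub_distrib, ← mul_sum, htot] at key
    linarith

theorem sum_mul_le_sum_mul_sort {n : ℕ} (c x : Fin n → ℝ) :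
    ∑ i, c i * x i ≤ ∑ i, (c ∘ Tuple.sort c) i * (x ∘ Tuple.sort x) i := by
  set τ := Tuple.sort c
  set σ := Tuple.sort x
  have hmono : Monovary (c ∘ τ) (x ∘ σ) :=
    (Tuple.monotone_sort c).monovary (Tuple.monotone_sort x)
  calc ∑ i, c i * x i = ∑ i, (c ∘ τ) i * (x ∘ σ) ((τ.trans σ.symm) i) := by
        rw [← Equiv.sum_comp τ]
        simp
    _ ≤ _ := hmono.sum_mul_comp_perm_le_sum_mul

theorem card_filter_le_val (n m : ℕ) : #{i : Fin n | m ≤ i.val} = n - m := by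
  rw [← card_map Fin.valEmbedding, ← Nat.card_Ico m n]
  congr 1
  ext j
  simp only [mem_map, mem_filter, mem_univ, true_and, Fin.valEmbedding_apply, mem_Ico]
  constructor
  · rintro ⟨i, hi, rfl⟩; exact ⟨hi, i.isLt⟩
  · rintro ⟨hm, hn⟩; exact ⟨⟨j, hn⟩, hm, rfl⟩

theorem kLargestSum_sub {n : ℕ} (x : Fin n → ℝ) (m : ℕ) :
    kLargestSum x (n - m) = ∑ i : Fin n with m ≤ i.val, (x ∘ Tuple.sort x) i :=
  sum_congr (filter_congr fun i _ => by have := i.isLt; omega) fun _ _ => rfl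

theorem exists_card_eq_kLargestSum_eq_sum {n k : ℕ} (hk : k ≤ n) (x : Fin n → ℝ) :
    ∃ S : Finset (Fin n), #S = k ∧ kLargestSum x k = ∑ i ∈ S, x i :=
  ⟨_, by rw [card_map, card_filter_le_val, Nat.sub_sub_self hk],
    (sum_map _ (Tuple.sort x).toEmbedding x).symm⟩

theorem sum_mul_le_kLargestSum {n k : ℕ} (hk : k ≤ n) (y : Fin n → ℝ) {c : Fin n → ℝ}
    (hc₀ : ∀ j, 0 ≤ c j) (hc₁ : ∀ j, c j ≤ 1) (hc : ∑ j, c j = k) :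
    ∑ j, c j * y j ≤ kLargestSum y k := by
  rw [← Equiv.sum_comp (Tuple.sort y), kLargestSum]
  refine sum_mul_le_sum_of_sum_eq_card (fun i hi j hj => ?_) (fun _ => hc₀ _) (fun _ => hc₁ _) ?_
  · simp only [mem_filter, mem_univ, true_and, not_le] at hi hj
    exact Tuple.monotone_sort y (Fin.le_def.2 (by omega))
  · rw [Equiv.sum_comp (Tuple.sort y) c, hc, card_filter_le_val, Nat.sub_sub_self hk]

theorem sum_mulVec_le_kLargestSum {n : ℕ} {D : Matrix (Fin n) (Fin n) ℝ}
    (hD : D ∈ doublyStochastic ℝ (Fin n)) (y : Fin n → ℝ) (S : Finset (Fin n)) :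
    ∑ i ∈ S, (D *ᵥ y) i ≤ kLargestSum y #S := by
  have hswap : ∑ i ∈ S, (D *ᵥ y) i = ∑ j, (∑ i ∈ S, D i j) * y j := by
    simp only [mulVec, dotProduct, sum_mul]
    exact sum_comm
  rw [hswap]
  refine sum_mul_le_kLargestSum ((card_le_univ S).trans_eq (Fintype.card_fin n)) y
    (fun j => sum_nonneg fun i _ => nonneg_of_mem_doublyStochastic hD) (fun j => ?_) ?_
  · calc ∑ i ∈ S, D i j ≤ ∑ i, D i j :=
          sum_le_sum_of_subset_of_nonneg (subset_univ S) fun _ _ _ =>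
            nonneg_of_mem_doublyStochastic hD
      _ = 1 := sum_col_of_mem_doublyStochastic hD j
  · rw [sum_comm]
    simp [sum_row_of_mem_doublyStochastic hD]

theorem majorizes_mulVec_of_mem_doublyStochastic {n : ℕ} {D : Matrix (Fin n) (Fin n) ℝ}
    (hD : D ∈ doublyStochastic ℝ (Fin n)) (y : Fin n → ℝ) : Majorizes (D *ᵥ y) y := by
  refine ⟨fun k hk => ?_, sum_mulVec_of_mem_doublyStochastic hD⟩
  obtain ⟨S, rfl, hS⟩ := exists_card_eq_kLargestSum_eq_sum hk (D *ᵥ y)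
  exact hS ▸ sum_mulVec_le_kLargestSum hD y S

theorem Majorizes.exists_perm_sum_mul_le {n : ℕ} {x y : Fin n → ℝ} (h : Majorizes x y)
    (c : Fin n → ℝ) : ∃ π : Equiv.Perm (Fin n), ∑ i, c i * x i ≤ ∑ i, c i * y (π i) := by
  refine ⟨(Tuple.sort c).symm.trans (Tuple.sort y), ?_⟩
  calc ∑ i, c i * x i ≤ ∑ i, (c ∘ Tuple.sort c) i * (x ∘ Tuple.sort x) i :=
        sum_mul_le_sum_mul_sort c x
    _ ≤ ∑ i, (c ∘ Tuple.sort c) i * (y ∘ Tuple.sort y) i :=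
        sum_mul_le_sum_mul_of_tail_sums_le (Tuple.monotone_sort c)
          (fun m => by simpa only [← kLargestSum_sub] using h.1 _ (n.sub_le m))
          ((Equiv.sum_comp _ x).trans (h.2.trans (Equiv.sum_comp _ y).symm))
    _ = _ := by
        rw [← Equiv.sum_comp (Tuple.sort c).symm]
        simp

theorem Majorizes.exists_mem_doublyStochastic {n : ℕ} {x y : Fin n → ℝ} (h : Majorizes x y) :
    ∃ D ∈ doublyStochastic ℝ (Fin n), x = D *ᵥ y := by
  set L := (mulVecBilin ℝ ℝ).flip y
  suffices hx : x ∈ L '' doublyStochastic ℝ (Fin n) by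
    obtain ⟨D, hD, rfl⟩ := hx
    exact ⟨D, hD, rfl⟩
  have hcompact : IsCompact (doublyStochastic ℝ (Fin n) : Set (Matrix (Fin n) (Fin n) ℝ)) := by
    rw [doublyStochastic_eq_convexHull_permMatrix]
    exact (Set.finite_range _).isCompact_convexHull (𝕜 := ℝ)
  by_contra hx
  obtain ⟨f, t, hf, hfx⟩ := geometric_hahn_banach_closed_point
    ((convex_doublyStochastic (R := ℝ)).linear_image L)
    (hcompact.image L.continuous_of_finiteDimensional).isClosed hx
  set c : Fin n → ℝ := fun i => f fun j => if i = j then 1 else 0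
  have hfc (v : Fin n → ℝ) : f v = ∑ i, c i * v i := by
    rw [← ContinuousLinearMap.coe_coe, LinearMap.pi_apply_eq_sum_univ]
    simp [c, mul_comm]
  obtain ⟨π, hπ⟩ := h.exists_perm_sum_mul_le c
  have hyπ := hf (y ∘ π) ⟨π.permMatrix ℝ, permMatrix_mem_doublyStochastic, permMatrix_mulVec π⟩
  rw [hfc] at hyπ hfx
  simp only [Function.comp_apply] at hyπ
  linarith

theorem hardy_littlewood_polya (n : ℕ) (x y : Fin n → ℝ) :
    Majorizes x y ↔ ∃ D ∈ doublyStochastic ℝ (Fin n), x = D.mulVec y :=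
  ⟨Majorizes.exists_mem_doublyStochastic, by
    rintro ⟨D, hD, rfl⟩
    exact majorizes_mulVec_of_mem_doublyStochastic hD y⟩
end

section
/- Horn's theorem (converse of Schur): If d, λ ∈ ℝⁿ and d is majorized by λ, then there exists an n×n real symmetric matrix whose diagonal entries are d_1,…,d_n and whose eigenvalues are λ_1,…,λ_n. -/
open Polynomial

open Matrix

noncomputable def rotMat {m : ℕ} (p q : Fin m) (c s : ℝ) : Matrix (Fin m) (Fin m) ℝ :=
  Matrix.of fun i j =>
    if i = p then (if j = p then c else if j = q then s else 0)
    else if i = q then (if j = p then -s else if j = q then c else 0)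
    else (if j = i then 1 else 0)

lemma sum_two_support {m : ℕ} (p q : Fin m) (hpq : p ≠ q) (f : Fin m → ℝ)
    (h : ∀ a, a ≠ p → a ≠ q → f a = 0) : ∑ a, f a = f p + f q := by
  rw [← Finset.sum_pair hpq]
  apply (Finset.sum_subset (Finset.subset_univ {p, q}) ?_).symm
  intro x _ hx
  simp only [Finset.mem_insert, Finset.mem_singleton, not_or] at hx
  exact h x hx.1 hx.2

lemma rot_apply_p {m : ℕ} (p q : Fin m) (c s : ℝ) (j : Fin m) :
    rotMat p q c s p j = if j = p then c else if j = q then s else 0 := by simp [rotMat]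

lemma rot_apply_q {m : ℕ} (p q : Fin m) (c s : ℝ) (hpq : p ≠ q) (j : Fin m) :
    rotMat p q c s q j = if j = p then -s else if j = q then c else 0 := by
  simp [rotMat, hpq.symm]

lemma rot_apply_other {m : ℕ} (p q : Fin m) (c s : ℝ) {i : Fin m} (hip : i ≠ p) (hiq : i ≠ q)
    (j : Fin m) : rotMat p q c s i j = if j = i then 1 else 0 := by
  simp [rotMat, hip, hiq]

lemma rotMat_master {m : ℕ} (p q : Fin m) (c s : ℝ) (hpq : p ≠ q) (v : Fin m → ℝ)
    (i j : Fin m) :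
    ∑ a, rotMat p q c s i a * v a * rotMat p q c s j a =
      if i = p ∧ j = p then c^2 * v p + s^2 * v q
      else if i = q ∧ j = q then s^2 * v p + c^2 * v q
      else if (i = p ∧ j = q) ∨ (i = q ∧ j = p) then c*s*(v q - v p)
      else if i = j then v i else 0 := by
  have hqp := hpq.symm
  by_cases hip : i = p
  · by_cases hjp : j = p
    · simp only [hip, hjp]
      rw [sum_two_support p q hpq _
        (fun a hap haq => by simp [rot_apply_p, hap, haq])]
      simp [rot_apply_p, hpq, hqp]; ring
    · by_cases hjq : j = q
      · simp only [hip, hjq]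
        rw [sum_two_support p q hpq _
          (fun a hap haq => by simp [rot_apply_p, rot_apply_q _ _ _ _ hpq, hap, haq])]
        simp [rot_apply_p, rot_apply_q _ _ _ _ hpq, hpq, hqp]; ring
      · simp only [hip]
        rw [Fintype.sum_eq_zero _ (fun a => ?_)]
        · simp only [hjp, hjq, hpq, hqp, if_false, and_false, false_and, false_or, or_self]
          rw [if_neg (fun h : p = j => hjp h.symm)]
        · by_cases hap : a = p
          · simp [hap, rot_apply_p, rot_apply_other p q c s hjp hjq, Ne.symm hjp]
          · by_cases haq : a = q
            · simp [haq, rot_apply_p, rot_apply_other p q c s hjp hjq, Ne.symm hjq, hqp]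
            · simp [rot_apply_p, hap, haq]
  · by_cases hiq : i = q
    · by_cases hjp : j = p
      · simp only [hiq, hjp]
        rw [sum_two_support p q hpq _
          (fun a hap haq => by simp [rot_apply_p, rot_apply_q _ _ _ _ hpq, hap, haq])]
        simp [rot_apply_p, rot_apply_q _ _ _ _ hpq, hpq, hqp]; ring
      · by_cases hjq : j = q
        · simp only [hiq, hjq]
          rw [sum_two_support p q hpq _
            (fun a hap haq => by simp [rot_apply_q _ _ _ _ hpq, hap, haq])]
          simp [rot_apply_q _ _ _ _ hpq, hpq, hqp]; ring
        · simp only [hiq]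
          rw [Fintype.sum_eq_zero _ (fun a => ?_)]
          · simp only [hjp, hjq, hpq, hqp, if_false, and_false, false_and, and_true, true_and, false_or, or_false, or_self]
            rw [if_neg (fun h : q = j => hjq h.symm)]
          · by_cases hap : a = p
            · simp [hap, rot_apply_q _ _ _ _ hpq, rot_apply_other p q c s hjp hjq, Ne.symm hjp]
            · by_cases haq : a = q
              · simp [haq, rot_apply_q _ _ _ _ hpq, rot_apply_other p q c s hjp hjq, Ne.symm hjq, hqp]
              · simp [rot_apply_q _ _ _ _ hpq, hap, haq]
    · by_cases hjp : j = p
      · simp only [hjp]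
        rw [Fintype.sum_eq_zero _ (fun a => ?_)]
        · simp [hip, hiq, hpq, hqp, fun h : i = p => hip h]
        · by_cases hai : a = i
          · simp [hai, rot_apply_p, rot_apply_other p q c s hip hiq, hip, hiq]
          · simp [rot_apply_other p q c s hip hiq, hai]
      · by_cases hjq : j = q
        · simp only [hjq]
          rw [Fintype.sum_eq_zero _ (fun a => ?_)]
          · simp [hip, hiq, hpq, hqp]
          · by_cases hai : a = i
            · simp [hai, rot_apply_q _ _ _ _ hpq, rot_apply_other p q c s hip hiq, hip, hiq]
            · simp [rot_apply_other p q c s hip hiq, hai]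
        · by_cases hij : i = j
          · rw [Fintype.sum_eq_single i
              (fun a hai => by simp [rot_apply_other p q c s hip hiq, hai])]
            simp only [← hij]
            simp [rot_apply_other p q c s hip hiq, hip, hiq]
          · rw [Fintype.sum_eq_zero _ (fun a => ?_)]
            · simp [hip, hiq, hjp, hjq, hij]
            · by_cases hai : a = i
              · simp [hai, rot_apply_other p q c s hip hiq,
                  rot_apply_other p q c s hjp hjq, fun h : i = j => hij h, Ne.symm hij]
              · simp [rot_apply_other p q c s hip hiq, hai]

lemma rotMat_orth {m : ℕ} (p q : Fin m) (c s : ℝ) (hpq : p ≠ q) (hcs : c^2 + s^2 = 1) :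
    rotMat p q c s * (rotMat p q c s)ᵀ = 1 := by
  ext i j
  rw [Matrix.mul_apply]
  have h : ∀ a, rotMat p q c s i a * (rotMat p q c s)ᵀ a j
      = rotMat p q c s i a * (fun _ => (1:ℝ)) a * rotMat p q c s j a := by
    intro a; rw [transpose_apply, mul_one]
  rw [Finset.sum_congr rfl (fun a _ => h a), rotMat_master p q c s hpq]
  split_ifs with h1 h2 h3 h4
  · rw [h1.1, h1.2, Matrix.one_apply_eq]; linarith
  · rw [h2.1, h2.2, Matrix.one_apply_eq]; linarith
  · rcases h3 with ⟨h5, h6⟩ | ⟨h5, h6⟩ <;>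
      rw [Matrix.one_apply_ne (by rw [h5, h6]; first | exact hpq | exact hpq.symm)] <;> ring
  · rw [h4, Matrix.one_apply_eq]
  · rw [Matrix.one_apply_ne h4]

lemma rotMat_conj_diag {m : ℕ} (p q : Fin m) (c s : ℝ) (hpq : p ≠ q) (v : Fin m → ℝ)
    (i j : Fin m) :
    (rotMat p q c s * Matrix.diagonal v * (rotMat p q c s)ᵀ) i j =
      if i = p ∧ j = p then c^2 * v p + s^2 * v q
      else if i = q ∧ j = q then s^2 * v p + c^2 * v q
      else if (i = p ∧ j = q) ∨ (i = q ∧ j = p) then c*s*(v q - v p)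
      else if i = j then v i else 0 := by
  rw [Matrix.mul_apply]
  have h : ∀ a, (rotMat p q c s * Matrix.diagonal v) i a * (rotMat p q c s)ᵀ a j
      = rotMat p q c s i a * v a * rotMat p q c s j a := by
    intro a; rw [transpose_apply, Matrix.mul_diagonal]
  rw [Finset.sum_congr rfl (fun a _ => h a), rotMat_master p q c s hpq]

lemma charpoly_diag {n : ℕ} (v : Fin n → ℝ) :
    (Matrix.diagonal v).charpoly = ∏ i, (X - C (v i)) := by
  have h : charmatrix (Matrix.diagonal v) = Matrix.diagonal (fun i => (X : ℝ[X]) - C (v i)) := by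
    ext i j
    rcases eq_or_ne i j with rfl | hij
    · simp
    · rw [charmatrix_apply_ne _ _ _ hij, Matrix.diagonal_apply_ne _ hij,
        Matrix.diagonal_apply_ne _ hij, map_zero, neg_zero]
  rw [Matrix.charpoly, h, Matrix.det_diagonal]

lemma charpoly_orth_conj {n : ℕ} (Q : Matrix (Fin n) (Fin n) ℝ) (hQ : Q * Qᵀ = 1)
    (M : Matrix (Fin n) (Fin n) ℝ) :
    (Q * M * Qᵀ).charpoly = M.charpoly := by
  let F : Matrix (Fin n) (Fin n) ℝ →+* Matrix (Fin n) (Fin n) ℝ[X] := (Polynomial.C : ℝ →+* ℝ[X]).mapMatrix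
  have hcm : charmatrix (Q * M * Qᵀ) = F Q * charmatrix M * F Qᵀ := by
    rw [charmatrix, charmatrix, mul_sub, sub_mul]
    congr 1
    · -- F Q * scalar X * F Qᵀ = scalar X
      have hc : Matrix.scalar (Fin n) (X : ℝ[X]) * F Qᵀ = F Qᵀ * Matrix.scalar (Fin n) X :=
        ((Matrix.scalar_commute (X : ℝ[X]) (fun r => Commute.all _ _) (F Qᵀ))).eq
      rw [mul_assoc, hc, ← mul_assoc, ← _root_.map_mul F, hQ, _root_.map_one F, one_mul]
    · rw [← _root_.map_mul F, ← _root_.map_mul F]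
  rw [Matrix.charpoly, Matrix.charpoly, hcm, Matrix.det_mul, Matrix.det_mul]
  have : F Q * F Qᵀ = 1 := by rw [← _root_.map_mul F, hQ, _root_.map_one F]
  have hdet : (F Q).det * (F Qᵀ).det = 1 := by rw [← Matrix.det_mul, this, Matrix.det_one]
  ring_nf
  calc (F Q).det * (charmatrix M).det * (F Qᵀ).det
      = ((F Q).det * (F Qᵀ).det) * (charmatrix M).det := by ring
    _ = (charmatrix M).det := by rw [hdet, one_mul]

lemma perm_conj {n : ℕ} (e : Fin n ≃ Fin n) (A : Matrix (Fin n) (Fin n) ℝ) :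
    ((1:Matrix (Fin n) (Fin n) ℝ).submatrix e id) * A * ((1:Matrix (Fin n) (Fin n) ℝ).submatrix e id)ᵀ = A.submatrix e e := by
  rw [Matrix.transpose_submatrix, Matrix.transpose_one]
  have h1 : ((1:Matrix (Fin n) (Fin n) ℝ).submatrix e id) * A = A.submatrix e id := by
    have := Matrix.submatrix_mul_equiv (1:Matrix (Fin n) (Fin n) ℝ) A e (Equiv.refl (Fin n)) id
    simpa using this
  rw [h1]
  have := Matrix.submatrix_mul_equiv A (1:Matrix (Fin n) (Fin n) ℝ) e (Equiv.refl (Fin n)) e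
  simpa using this

lemma perm_orth {n : ℕ} (e : Fin n ≃ Fin n) :
    ((1:Matrix (Fin n) (Fin n) ℝ).submatrix e id) * ((1:Matrix (Fin n) (Fin n) ℝ).submatrix e id)ᵀ = 1 := by
  have := perm_conj e (1 : Matrix (Fin n) (Fin n) ℝ)
  rwa [Matrix.mul_one, Matrix.submatrix_one_equiv] at this

lemma horn_core (n : ℕ) : ∀ (d lam : ℕ → ℝ),
    (∀ i j, i ≤ j → j < n → d j ≤ d i) →
    (∀ i j, i ≤ j → j < n → lam j ≤ lam i) →
    (∀ k, k ≤ n → ∑ i ∈ Finset.range k, d i ≤ ∑ i ∈ Finset.range k, lam i) →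
    (∑ i ∈ Finset.range n, d i = ∑ i ∈ Finset.range n, lam i) →
    ∃ Q : Matrix (Fin n) (Fin n) ℝ, Q * Qᵀ = 1 ∧
      ∀ i : Fin n, (Q * Matrix.diagonal (fun j : Fin n => lam (j : ℕ)) * Qᵀ) i i = d (i : ℕ) := by
  induction n with
  | zero =>
    intro d lam _ _ _ _
    exact ⟨1, by simp [Matrix.transpose_one], fun i => i.elim0⟩
  | succ n ih =>
    intro d lam hd hl hmaj hsum
    rcases Nat.eq_zero_or_pos n with rfl | hn
    · -- size 1
      have h1 : d 0 ≤ lam 0 := by simpa using hmaj 1 le_rfl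
      have h2 : d 0 = lam 0 := by simpa using hsum
      refine ⟨1, by simp [Matrix.transpose_one], fun i => ?_⟩
      have : (i : ℕ) = 0 := by omega
      simp [this, Matrix.one_apply, h2]
    · -- main case
      have hd0lam0 : d 0 ≤ lam 0 := by simpa using hmaj 1 (by omega)
      have hlamn : lam n ≤ d 0 := by
        have h1 : ∑ i ∈ Finset.range (n+1), (fun _ => lam n) i ≤ ∑ i ∈ Finset.range (n+1), lam i :=
          Finset.sum_le_sum (fun i hi => hl i n (by simp at hi; omega) (by omega))
        have h2 : ∑ i ∈ Finset.range (n+1), d i ≤ ∑ i ∈ Finset.range (n+1), (fun _ => d 0) i :=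
          Finset.sum_le_sum (fun i hi => hd 0 i (by omega) (by simp at hi; omega))
        simp only [Finset.sum_const, Finset.card_range, nsmul_eq_mul] at h1 h2
        have := h1.trans (hsum.symm.le.trans h2)
        have hpos : (0:ℝ) < (n+1 : ℕ) := by positivity
        exact le_of_mul_le_mul_left this hpos
      -- choice of k
      obtain ⟨k, hkn, hlamk, hlamk1⟩ :
          ∃ k, k < n ∧ d 0 ≤ lam k ∧ lam (k+1) ≤ d 0 := by
        classical
        set S : Finset ℕ := (Finset.range n).filter (fun j => d 0 ≤ lam j) with hS
        have hS0 : 0 ∈ S := by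
          simp only [hS, Finset.mem_filter, Finset.mem_range]
          exact ⟨hn, hd0lam0⟩
        set k := S.max' ⟨0, hS0⟩ with hk
        have hkS : k ∈ S := S.max'_mem _
        simp only [hS, Finset.mem_filter, Finset.mem_range] at hkS
        refine ⟨k, hkS.1, hkS.2, ?_⟩
        rcases Nat.lt_or_ge (k+1) n with hlt | hge
        · by_contra hcon
          push_neg at hcon
          have hmem : k + 1 ∈ S := by
            simp only [hS, Finset.mem_filter, Finset.mem_range]
            exact ⟨hlt, hcon.le⟩
          have := S.le_max' _ hmem
          omega
        · have : k + 1 = n := by omega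
          rw [this]; exact hlamn
      set μ : ℝ := lam k + lam (k+1) - d 0 with hμ
      set lam' : ℕ → ℝ := fun j => if j < k then lam j else if j = k then μ else lam (j+1)
        with hlam'
      set d' : ℕ → ℝ := fun j => d (j+1) with hd'
      have hd'sorted : ∀ i j, i ≤ j → j < n → d' j ≤ d' i :=
        fun i j hij hjn => hd (i+1) (j+1) (by omega) (by omega)
      have hμlek : μ ≤ lam k := by simp only [hμ]; linarith
      have hk1leμ : lam (k+1) ≤ μ := by simp only [hμ]; linarith
      have hl'sorted : ∀ i j, i ≤ j → j < n → lam' j ≤ lam' i := by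
        intro i j hij hjn
        simp only [hlam']
        rcases lt_trichotomy j k with hj | hj | hj
        · rw [if_pos hj, if_pos (lt_of_le_of_lt hij hj)]
          exact hl i j hij (by omega)
        · rw [if_neg (by omega), if_pos hj]
          rcases Nat.lt_or_ge i k with hi | hi
          · rw [if_pos hi]
            exact hμlek.trans (hl i k hi.le (by omega))
          · have hik : i = k := by omega
            rw [if_neg (by omega), if_pos hik]
        · rw [if_neg (by omega), if_neg (by omega)]
          rcases lt_trichotomy i k with hi | hi | hi
          · rw [if_pos hi]
            exact hl i (j+1) (by omega) (by omega)
          · rw [if_neg (by omega), if_pos hi]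
            exact (hl (k+1) (j+1) (by omega) (by omega)).trans hk1leμ
          · rw [if_neg (by omega), if_neg (by omega)]
            exact hl (i+1) (j+1) (by omega) (by omega)
      have hshift : ∀ m : ℕ, ∑ i ∈ Finset.range m, d' i = ∑ i ∈ Finset.range (m+1), d i - d 0 := by
        intro m
        rw [Finset.sum_range_succ' d m]
        simp [hd']
      have hlamsum : ∀ m : ℕ, k < m →
          ∑ i ∈ Finset.range m, lam' i = ∑ i ∈ Finset.range (m+1), lam i - d 0 := by
        intro m hm
        induction m with
        | zero => omega
        | succ m ihm =>
          rcases Nat.lt_or_ge k m with hkm | hkm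
          · rw [Finset.sum_range_succ, ihm hkm, Finset.sum_range_succ lam (m+1)]
            have : lam' m = lam (m+1) := by
              simp only [hlam']
              rw [if_neg (by omega), if_neg (by omega)]
            rw [this]; ring
          · have hmk : m = k := by omega
            subst hmk
            rw [Finset.sum_range_succ]
            have h1 : ∀ i ∈ Finset.range m, lam' i = lam i := by
              intro i hi
              simp only [Finset.mem_range] at hi
              simp only [hlam']
              rw [if_pos hi]
            rw [Finset.sum_congr rfl h1]
            have h2 : lam' m = μ := by simp [hlam']
            rw [h2, Finset.sum_range_succ lam (m+1), Finset.sum_range_succ lam m]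
            simp only [hμ]; ring
      have hmaj' : ∀ m, m ≤ n → ∑ i ∈ Finset.range m, d' i ≤ ∑ i ∈ Finset.range m, lam' i := by
        intro m hm
        rcases Nat.lt_or_ge k m with hkm | hkm
        · rw [hshift m, hlamsum m hkm]
          have := hmaj (m+1) (by omega)
          linarith
        · -- m ≤ k
          have h1 : ∑ i ∈ Finset.range m, d' i ≤ ∑ i ∈ Finset.range m, (fun _ => d 0) i :=
            Finset.sum_le_sum (fun i hi => by
              simp only [Finset.mem_range] at hi
              exact hd 0 (i+1) (by omega) (by omega))
          have h2 : ∑ i ∈ Finset.range m, (fun _ => d 0) i ≤ ∑ i ∈ Finset.range m, lam' i :=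
            Finset.sum_le_sum (fun i hi => by
              simp only [Finset.mem_range] at hi
              have : lam' i = lam i := by simp only [hlam']; rw [if_pos (by omega)]
              rw [this]
              exact hlamk.trans (hl i k (by omega) (by omega)))
          exact h1.trans h2
      have hsum' : ∑ i ∈ Finset.range n, d' i = ∑ i ∈ Finset.range n, lam' i := by
        rw [hshift n, hlamsum n hkn, hsum]
      obtain ⟨Q', hQ'orth, hQ'diag⟩ := ih d' lam' hd'sorted hl'sorted hmaj' hsum'
      -- rotation parameters
      obtain ⟨c, s, hcs, hrot⟩ : ∃ c s : ℝ, c^2 + s^2 = 1 ∧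
          c^2 * lam k + s^2 * lam (k+1) = d 0 := by
        rcases eq_or_lt_of_le (hl k (k+1) (by omega) (by omega)) with heq | hlt
        · refine ⟨1, 0, by norm_num, ?_⟩
          have hdk : d 0 = lam k := by linarith
          have hdk1 : lam (k+1) = d 0 := by linarith
          rw [hdk1, hdk]; ring
        · set D := lam k - lam (k+1) with hD
          have hDpos : 0 < D := by linarith
          refine ⟨Real.sqrt ((d 0 - lam (k+1))/D), Real.sqrt ((lam k - d 0)/D), ?_, ?_⟩
          · rw [Real.sq_sqrt (div_nonneg (by linarith) hDpos.le),
              Real.sq_sqrt (div_nonneg (by linarith) hDpos.le)]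
            field_simp
            linarith
          · rw [Real.sq_sqrt (div_nonneg (by linarith) hDpos.le),
              Real.sq_sqrt (div_nonneg (by linarith) hDpos.le)]
            field_simp
            ring
      -- build the orthogonal matrix
      have hkn1 : k < n + 1 := by omega
      have hk1n1 : k + 1 < n + 1 := by omega
      set K : Fin (n+1) := ⟨k, hkn1⟩ with hK
      set K1 : Fin (n+1) := ⟨k+1, hk1n1⟩ with hK1
      have hKK1 : K ≠ K1 := by simp [hK, hK1, Fin.ext_iff]
      set lamF : Fin (n+1) → ℝ := fun j => lam (j:ℕ) with hlamF
      set G : Matrix (Fin (n+1)) (Fin (n+1)) ℝ := rotMat K K1 c s with hG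
      set e : Equiv.Perm (Fin (n+1)) := (Fin.cycleRange K).symm with he
      set P : Matrix (Fin (n+1)) (Fin (n+1)) ℝ :=
        (1 : Matrix (Fin (n+1)) (Fin (n+1)) ℝ).submatrix e id with hP
      set R : Matrix (Fin (n+1)) (Fin (n+1)) ℝ := Matrix.of (fun i j : Fin (n+1) =>
        Fin.cases (Fin.cases (1:ℝ) (fun _ => 0) j)
          (fun i' => Fin.cases 0 (fun j' => Q' i' j') j) i) with hR
      have hR00 : R 0 0 = 1 := rfl
      have hR0s : ∀ j' : Fin n, R 0 j'.succ = 0 := fun j' => by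
        simp [hR]
      have hRs0 : ∀ i' : Fin n, R i'.succ 0 = 0 := fun i' => by
        simp [hR]
      have hRss : ∀ i' j' : Fin n, R i'.succ j'.succ = Q' i' j' := fun i' j' => by
        simp [hR]
      -- facts about the permutation e
      have he0 : e 0 = K := by
        rw [he, Equiv.symm_apply_eq]
        exact (Fin.cycleRange_self K).symm
      have hesucc_lt : ∀ j : Fin n, (j:ℕ) < k → e j.succ = j.castSucc := by
        intro j hj
        rw [he, Equiv.symm_apply_eq]
        rw [Fin.cycleRange_of_lt (by simpa [hK, Fin.lt_def] using hj)]
        exact Fin.coeSucc_eq_succ.symm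
      have hesucc_ge : ∀ j : Fin n, k ≤ (j:ℕ) → e j.succ = j.succ := by
        intro j hj
        rw [he, Equiv.symm_apply_eq]
        refine (Fin.cycleRange_of_gt ?_).symm
        simp [hK, Fin.lt_def]
        omega
      have hxK : ∀ a : Fin n, e a.succ ≠ K := by
        intro a h
        exact Fin.succ_ne_zero a (e.injective (h.trans he0.symm))
      have hK1iff : ∀ a : Fin n, e a.succ = K1 ↔ (a:ℕ) = k := by
        intro a
        constructor
        · intro h
          rcases Nat.lt_or_ge (a:ℕ) k with ha | ha
          · rw [hesucc_lt a ha] at h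
            have := congrArg Fin.val h
            simp [hK1] at this
            omega
          · rw [hesucc_ge a ha] at h
            have := congrArg Fin.val h
            simp [hK1] at this
            omega
        · intro h
          rw [hesucc_ge a (le_of_eq h.symm)]
          exact Fin.ext (by simp [hK1, h])
      have hvalF : ∀ a : Fin n, (a:ℕ) ≠ k → lamF (e a.succ) = lam' (a:ℕ) := by
        intro a ha
        rcases Nat.lt_or_ge (a:ℕ) k with h | h
        · rw [hesucc_lt a h]
          simp only [hlamF, hlam', Fin.coe_castSucc]
          rw [if_pos h]
        · have h' : k < (a:ℕ) := by omega
          rw [hesucc_ge a h]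
          simp only [hlamF, hlam', Fin.val_succ]
          rw [if_neg (by omega), if_neg (by omega)]
      -- the matrix after rotation and permutation
      set M : Matrix (Fin (n+1)) (Fin (n+1)) ℝ :=
        (G * Matrix.diagonal lamF * Gᵀ).submatrix e e with hM
      have hB00 : M 0 0 = d 0 := by
        rw [hM, Matrix.submatrix_apply, he0, hG, rotMat_conj_diag _ _ _ _ hKK1]
        rw [if_pos ⟨rfl, rfl⟩]
        simpa [hlamF, hK, hK1] using hrot
      have hBss : ∀ a b : Fin n, M a.succ b.succ
          = Matrix.diagonal (fun j : Fin n => lam' (j:ℕ)) a b := by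
        intro a b
        rw [hM, Matrix.submatrix_apply, hG, rotMat_conj_diag _ _ _ _ hKK1]
        by_cases hab : a = b
        · subst hab
          rw [Matrix.diagonal_apply_eq]
          by_cases hak : (a:ℕ) = k
          · rw [if_neg (fun h => hxK a h.1), if_pos ⟨(hK1iff a).2 hak, (hK1iff a).2 hak⟩]
            have h1 : lamF K = lam k := by simp [hlamF, hK]
            have h2 : lamF K1 = lam (k+1) := by simp [hlamF, hK1]
            rw [h1, h2]
            have h3 : lam' (a:ℕ) = μ := by
              rw [hak]; simp [hlam']
            rw [h3, hμ]
            have : s^2 * lam k + c^2 * lam (k+1)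
                = (c^2+s^2) * (lam k + lam (k+1)) - (c^2 * lam k + s^2 * lam (k+1)) := by ring
            rw [this, hcs, hrot]
            ring
          · have hne1 : e a.succ ≠ K1 := fun h => hak ((hK1iff a).1 h)
            rw [if_neg (fun h => hxK a h.1), if_neg (fun h => hne1 h.1),
              if_neg (by rintro (⟨h, _⟩ | ⟨_, h⟩) <;> exact hxK a h), if_pos rfl]
            exact hvalF a hak
        · rw [Matrix.diagonal_apply_ne _ hab]
          have hne : e a.succ ≠ e b.succ := fun h =>
            hab (Fin.succ_injective n (e.injective h))
          rw [if_neg, if_neg, if_neg, if_neg]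
          · exact hne
          · rintro (⟨h, _⟩ | ⟨_, h⟩)
            · exact hxK a h
            · exact hxK b h
          · rintro ⟨h1, h2⟩
            exact hab (Fin.ext (((hK1iff a).1 h1).trans ((hK1iff b).1 h2).symm))
          · rintro ⟨h1, _⟩
            exact hxK a h1
      -- the full orthogonal matrix
      refine ⟨R * (P * G), ?_, ?_⟩
      · -- orthogonality
        have hRorth : R * Rᵀ = 1 := by
          ext i j
          rw [Matrix.mul_apply]
          simp only [Matrix.transpose_apply]
          rw [Fin.sum_univ_succ]
          induction i using Fin.cases with
          | zero =>
            induction j using Fin.cases with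
            | zero => simp [hR00, hR0s, Matrix.one_apply]
            | succ j' =>
              simp only [hR00, hR0s, hRs0, hRss, one_mul, mul_zero, zero_mul]
              rw [Matrix.one_apply_ne (Fin.succ_ne_zero j').symm]
              simp [hRs0]
          | succ i' =>
            induction j using Fin.cases with
            | zero =>
              simp only [hR00, hR0s, hRs0, hRss, mul_one, mul_zero, zero_mul]
              rw [Matrix.one_apply_ne (Fin.succ_ne_zero i')]
              simp [hR0s]
            | succ j' =>
              simp only [hRs0, hRss, zero_mul, zero_add]
              have : ∑ a : Fin n, Q' i' a * Q' j' a = (Q' * Q'ᵀ) i' j' := by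
                rw [Matrix.mul_apply]
                simp [Matrix.transpose_apply]
              rw [this, hQ'orth]
              simp [Matrix.one_apply, Fin.succ_inj]
        have hGorth : G * Gᵀ = 1 := rotMat_orth K K1 c s hKK1 hcs
        have hPorth : P * Pᵀ = 1 := perm_orth e
        calc R * (P * G) * (R * (P * G))ᵀ
            = R * (P * (G * Gᵀ) * Pᵀ) * Rᵀ := by
              simp only [Matrix.transpose_mul, Matrix.mul_assoc]
          _ = 1 := by rw [hGorth, Matrix.mul_one, hPorth, Matrix.mul_one, hRorth]
      · -- diagonal entries
        intro i
        have hconj : R * (P * G) * Matrix.diagonal lamF * (R * (P * G))ᵀ = R * M * Rᵀ := by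
          rw [hM, ← perm_conj e, ← hP]
          simp only [Matrix.transpose_mul, Matrix.mul_assoc]
        show (R * (P * G) * Matrix.diagonal (fun j : Fin (n+1) => lam (j:ℕ))
          * (R * (P * G))ᵀ) i i = d (i:ℕ)
        rw [show (fun j : Fin (n+1) => lam (j:ℕ)) = lamF from rfl, hconj]
        induction i using Fin.cases with
        | zero =>
          have h1 : (R * M) 0 0 = d 0 := by
            rw [Matrix.mul_apply, Fin.sum_univ_succ, hR00, one_mul]
            simp [hR0s, hB00]
          rw [Matrix.mul_apply, Fin.sum_univ_succ]
          simp only [Matrix.transpose_apply, hR00, hR0s, mul_one, mul_zero]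
          simp only [Fin.val_zero]
          rw [h1]
          simp [hR0s]
        | succ i' =>
          have h1 : ∀ b' : Fin n, (R * M) i'.succ b'.succ
              = (Q' * Matrix.diagonal (fun j : Fin n => lam' (j:ℕ))) i' b' := by
            intro b'
            rw [Matrix.mul_apply, Fin.sum_univ_succ, hRs0, zero_mul, zero_add,
              Matrix.mul_apply]
            exact Finset.sum_congr rfl (fun a' _ => by rw [hRss, hBss])
          rw [Matrix.mul_apply, Fin.sum_univ_succ]
          simp only [Matrix.transpose_apply, hRs0, mul_zero, zero_add, zero_mul]
          have h2 : ∑ b' : Fin n, (R * M) i'.succ b'.succ * R i'.succ b'.succ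
              = (Q' * Matrix.diagonal (fun j : Fin n => lam' (j:ℕ)) * Q'ᵀ) i' i' := by
            rw [Matrix.mul_apply]
            exact Finset.sum_congr rfl (fun b' _ => by
              rw [h1 b', hRss, Matrix.transpose_apply])
          rw [h2, hQ'diag i']
          simp [hd']

-- sorted ℕ-padded version of a tuple, largest first
noncomputable def padSort {n : ℕ} (x : Fin n → ℝ) : ℕ → ℝ :=
  fun i => if h : i < n then x (Tuple.sort x (Fin.rev ⟨i, h⟩)) else 0

lemma padSort_sorted {n : ℕ} (x : Fin n → ℝ) :
    ∀ i j, i ≤ j → j < n → padSort x j ≤ padSort x i := by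
  intro i j hij hjn
  have hin : i < n := lt_of_le_of_lt hij hjn
  simp only [padSort, dif_pos hin, dif_pos hjn]
  exact Tuple.monotone_sort x (Fin.rev_le_rev.2 (by exact hij))

lemma padSort_prefix {n : ℕ} (x : Fin n → ℝ) (k : ℕ) (hk : k ≤ n) :
    ∑ i ∈ Finset.range k, padSort x i = kLargestSum x k := by
  unfold kLargestSum
  refine Finset.sum_bij' (fun a ha => Fin.rev ⟨a, lt_of_lt_of_le (Finset.mem_range.1 ha) hk⟩)
    (fun b _ => (Fin.rev b : ℕ)) ?_ ?_ ?_ ?_ ?_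
  · intro a ha
    simp only [Finset.mem_filter, Finset.mem_univ, true_and, Fin.val_rev]
    have := Finset.mem_range.1 ha
    omega
  · intro b hb
    simp only [Finset.mem_filter, Finset.mem_univ, true_and] at hb
    simp only [Finset.mem_range, Fin.val_rev]
    have := b.isLt
    omega
  · intro a ha
    simp [Fin.rev_rev]
  · intro b hb
    apply Fin.ext
    simp only [Fin.val_rev]
    have := b.isLt
    omega
  · intro a ha
    have han : a < n := lt_of_lt_of_le (Finset.mem_range.1 ha) hk
    simp only [padSort, dif_pos han, Function.comp_apply]

lemma padSort_total {n : ℕ} (x : Fin n → ℝ) :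
    ∑ i ∈ Finset.range n, padSort x i = ∑ i, x i := by
  rw [← Fin.sum_univ_eq_sum_range]
  rw [show (fun i : Fin n => padSort x (i:ℕ)) = fun i : Fin n => x (Tuple.sort x (Fin.rev i))
    from funext fun i => by simp [padSort, i.isLt]]
  exact Fintype.sum_equiv (Fin.revPerm.trans (Tuple.sort x)) _ _ (fun i => rfl)

lemma orth_mul {n : ℕ} {A B : Matrix (Fin n) (Fin n) ℝ} (hA : A * Aᵀ = 1) (hB : B * Bᵀ = 1) :
    (A * B) * (A * B)ᵀ = 1 := by
  rw [Matrix.transpose_mul, show A * B * (Bᵀ * Aᵀ) = A * (B * Bᵀ) * Aᵀ by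
    simp only [Matrix.mul_assoc], hB, Matrix.mul_one, hA]

theorem horn_converse_schur (n : ℕ) (d lam : Fin n → ℝ) (h : Majorizes d lam) :
    ∃ A : Matrix (Fin n) (Fin n) ℝ, A.transpose = A ∧ (∀ i, A i i = d i) ∧
      A.charpoly = ∏ i, (X - C (lam i)) := by
  obtain ⟨hmaj, hsum⟩ := h
  set πd : Equiv.Perm (Fin n) := Fin.revPerm.trans (Tuple.sort d) with hπd
  set πl : Equiv.Perm (Fin n) := Fin.revPerm.trans (Tuple.sort lam) with hπl
  have hmaj' : ∀ k, k ≤ n → ∑ i ∈ Finset.range k, padSort d i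
      ≤ ∑ i ∈ Finset.range k, padSort lam i := by
    intro k hk
    rw [padSort_prefix d k hk, padSort_prefix lam k hk]
    exact hmaj k hk
  have hsum' : ∑ i ∈ Finset.range n, padSort d i = ∑ i ∈ Finset.range n, padSort lam i := by
    rw [padSort_total, padSort_total, hsum]
  obtain ⟨Q, hQorth, hQdiag⟩ := horn_core n (padSort d) (padSort lam)
    (padSort_sorted d) (padSort_sorted lam) hmaj' hsum'
  -- permutation matrices
  set Pl : Matrix (Fin n) (Fin n) ℝ := (1 : Matrix (Fin n) (Fin n) ℝ).submatrix πl id with hPl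
  set Pd : Matrix (Fin n) (Fin n) ℝ :=
    (1 : Matrix (Fin n) (Fin n) ℝ).submatrix πd.symm id with hPd
  set Qf : Matrix (Fin n) (Fin n) ℝ := Pd * Q * Pl with hQf
  have hQforth : Qf * Qfᵀ = 1 := orth_mul (orth_mul (perm_orth πd.symm) hQorth) (perm_orth πl)
  refine ⟨Qf * Matrix.diagonal lam * Qfᵀ, ?_, ?_, ?_⟩
  · simp [Matrix.transpose_mul, Matrix.diagonal_transpose, Matrix.mul_assoc]
  · intro i
    have hdiagl : Pl * Matrix.diagonal lam * Plᵀ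
        = Matrix.diagonal (fun j : Fin n => padSort lam (j : ℕ)) := by
      rw [hPl, perm_conj πl (Matrix.diagonal lam), Matrix.submatrix_diagonal_equiv]
      refine congrArg Matrix.diagonal (funext fun j => ?_)
      simp [padSort, j.isLt, hπl, Fin.eta, Function.comp]
    have hassoc : Qf * Matrix.diagonal lam * Qfᵀ
        = Pd * (Q * (Pl * Matrix.diagonal lam * Plᵀ) * Qᵀ) * Pdᵀ := by
      rw [hQf]
      simp only [Matrix.transpose_mul, Matrix.mul_assoc]
    rw [hassoc, hdiagl, hPd, perm_conj πd.symm, Matrix.submatrix_apply]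
    rw [hQdiag (πd.symm i)]
    simp only [padSort, (πd.symm i).isLt, dif_pos, Fin.eta]
    have h2 : (Tuple.sort d) ((πd.symm i).rev) = πd (πd.symm i) := rfl
    rw [h2, Equiv.apply_symm_apply]
  · rw [charpoly_orth_conj Qf hQforth, charpoly_diag]
end

section
/- Löwner–Heinz inequality: If A and B are positive semidefinite Hermitian matrices with A ≥ B (i.e., A − B positive semidefinite) and 0 ≤ r ≤ 1, then Aʳ ≥ Bʳ. -/
open scoped ComplexOrder

/-- The `r`-th power of a Hermitian matrix, defined via the spectral decomposition. -/
noncomputable def hermPow {n : ℕ} {A : Matrix (Fin n) (Fin n) ℂ} (hA : A.IsHermitian)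
    (r : ℝ) : Matrix (Fin n) (Fin n) ℂ :=
  (hA.eigenvectorUnitary : Matrix (Fin n) (Fin n) ℂ) *
    Matrix.diagonal (fun i => ((hA.eigenvalues i ^ r : ℝ) : ℂ)) *
    star (hA.eigenvectorUnitary : Matrix (Fin n) (Fin n) ℂ)

open scoped MatrixOrder Matrix.Norms.L2Operator

theorem hermPow_eq_rpow {n : ℕ} {A : Matrix (Fin n) (Fin n) ℂ} (hA : A.PosSemidef) (r : ℝ) :
    hermPow hA.1 r = A ^ r := by
  rw [CFC.rpow_eq_cfc_real hA.nonneg, hA.1.cfc_eq]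
  rfl

theorem loewner_heinz (n : ℕ) (A B : Matrix (Fin n) (Fin n) ℂ)
    (hA : A.PosSemidef) (hB : B.PosSemidef) (hAB : (A - B).PosSemidef)
    (r : ℝ) (hr0 : 0 ≤ r) (hr1 : r ≤ 1) :
    (hermPow hA.1 r - hermPow hB.1 r).PosSemidef := by
  rw [hermPow_eq_rpow hA, hermPow_eq_rpow hB]
  exact Matrix.le_iff.mp (CFC.rpow_le_rpow ⟨hr0, hr1⟩ (Matrix.le_iff.mpr hAB))
end

section
/- Perron–Frobenius theorem: If A is an irreducible n×n nonnegative real matrix with n ≥ 2, then the spectral radius ρ(A) is strictly positive, ρ(A) is a simple eigenvalue of A, and A has an eigenvector with all entries strictly positive corresponding to ρ(A). -/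
/-!
The Perron root `ρ` is the supremum of the Collatz–Wielandt set of those `r` with
`r • x ≤ A *ᵥ x` for some `x` in the standard simplex; this set is compact, so `ρ` is attained.
Each application of `1 + A` enlarges a nonempty proper positive support (an edge of `A` leaves
it), so `(1 + A) ^ (n - 1)` sends every nonzero `x ≥ 0` to a positive vector. Applied to
`A *ᵥ x - ρ • x` this shows that a maximizing `x` is an eigenvector (otherwise `ρ` could be
increased), and applied to an eigenvector that it is positive. The triangle inequality bounds
every complex eigenvalue by `ρ`. For simplicity, `χ_A' = ∑ i, χ_{A_ii}` over the principal
minors, and no minor has a real eigenvalue `≥ ρ`: extending its eigenvector by zero would give a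
nonnegative eigenvector of `A` with a zero entry. Hence `χ_A'(ρ) > 0`.
-/

open Polynomial Finset Filter Topology Function

namespace Polynomial

theorem Monic.eval_pos_of_forall_ge_not_isRoot {p : ℝ[X]} (hp : p.Monic) {t : ℝ}
    (h : ∀ s ≥ t, ¬ p.IsRoot s) : 0 < p.eval t := by
  by_cases hp1 : p = 1
  · simp [hp1]
  have htend := tendsto_atTop_of_leadingCoeff_nonneg p (hp.degree_pos.2 hp1)
    (by simp [hp.leadingCoeff])
  obtain ⟨b, hb1, hbt⟩ := ((htend.eventually_ge_atTop 1).and (eventually_ge_atTop t)).exists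
  by_contra! hle
  obtain ⟨c, hc, hc0⟩ :=
    intermediate_value_Icc hbt p.continuous.continuousOn ⟨hle, by linarith⟩
  exact h c hc.1 hc0

end Polynomial

namespace Matrix

section Charpoly

variable {R : Type*} [CommRing R]

theorem derivative_det {ι : Type*} [Fintype ι] [DecidableEq ι] (M : Matrix ι ι R[X]) :
    derivative M.det = ∑ i, (M.updateCol i fun r => derivative (M r i)).det := by
  simp only [det_apply', derivative_sum, derivative_intCast_mul, derivative_prod_finset]
  rw [sum_comm]
  refine sum_congr rfl fun σ _ => ?_
  rw [mul_sum]
  refine sum_congr rfl fun i _ => ?_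
  rw [← mul_prod_erase univ _ (mem_univ i), updateCol_self, mul_comm (derivative _)]
  congr 2
  exact prod_congr rfl fun j hj => by rw [updateCol_ne (ne_of_mem_erase hj)]

theorem det_updateCol_single_self {N : ℕ} (B : Matrix (Fin (N + 1)) (Fin (N + 1)) R)
    (i : Fin (N + 1)) :
    (B.updateCol i (Pi.single i 1)).det = (B.submatrix i.succAbove i.succAbove).det := by
  rw [← cramer_apply, cramer_eq_adjugate_mulVec, mulVec_single_one, col_apply,
    adjugate_fin_succ_eq_det_submatrix]
  simp [← two_mul, pow_mul]

theorem charmatrix_submatrix {ι κ : Type*} [Fintype ι] [DecidableEq ι] [Fintype κ]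
    [DecidableEq κ] (M : Matrix ι ι R) {e : κ → ι} (he : Injective e) :
    (charmatrix M).submatrix e e = charmatrix (M.submatrix e e) := by
  ext r c
  by_cases h : r = c
  · subst h; simp [charmatrix_apply_eq]
  · simp [charmatrix_apply_ne _ _ _ h, charmatrix_apply_ne _ _ _ (he.ne h)]

theorem derivative_charpoly {N : ℕ} (M : Matrix (Fin (N + 1)) (Fin (N + 1)) R) :
    derivative M.charpoly = ∑ i : Fin (N + 1), (M.submatrix i.succAbove i.succAbove).charpoly := by
  rw [charpoly, derivative_det]
  refine sum_congr rfl fun i _ => ?_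
  have hcol : (fun r => derivative (charmatrix M r i)) = Pi.single i 1 := by
    ext1 r
    by_cases h : r = i
    · subst h; simp [charmatrix_apply_eq]
    · simp [h]
  rw [hcol, det_updateCol_single_self, charmatrix_submatrix _ Fin.succAbove_right_injective,
    charpoly]

theorem isRoot_charpoly_iff_exists_mulVec_eq_smul {ι K : Type*} [Fintype ι] [DecidableEq ι]
    [Field K] (M : Matrix ι ι K) (μ : K) :
    M.charpoly.IsRoot μ ↔ ∃ v ≠ 0, M *ᵥ v = μ • v := by
  rw [IsRoot, eval_charpoly, ← exists_mulVec_eq_zero_iff]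
  simp [sub_mulVec, sub_eq_zero, eq_comm]

end Charpoly

variable {ι : Type*} [Fintype ι]

theorem mulVec_nonneg {κ : Type*} {A : Matrix κ ι ℝ} (hA : ∀ i j, 0 ≤ A i j) {x : ι → ℝ}
    (hx : 0 ≤ x) : 0 ≤ A *ᵥ x :=
  fun i => sum_nonneg fun j _ => mul_nonneg (hA i j) (hx j)

theorem mulVec_extend_zero_apply {κ R : Type*} [Fintype κ] [CommRing R] (A : Matrix ι ι R)
    {e : κ → ι} (he : Injective e) (z : κ → R) (k : κ) :
    (A *ᵥ extend e z 0) (e k) = (A.submatrix e e *ᵥ z) k := by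
  refine (Fintype.sum_of_injective e he _ _ (fun j hj => ?_) fun m => ?_).symm
  · simp [extend_apply' _ _ _ (by simpa using hj)]
  · simp [he.extend_apply]

theorem norm_smul_le_mulVec_norm {𝕜 : Type*} [NormedField 𝕜] [NormedAlgebra ℝ 𝕜]
    {A : Matrix ι ι ℝ} (hA : ∀ i j, 0 ≤ A i j) {y : ι → 𝕜} {μ : 𝕜}
    (h : A.map (algebraMap ℝ 𝕜) *ᵥ y = μ • y) :
    ‖μ‖ • (fun i => ‖y i‖) ≤ A *ᵥ fun i => ‖y i‖ := fun i =>
  calc ‖μ‖ * ‖y i‖ = ‖(A.map (algebraMap ℝ 𝕜) *ᵥ y) i‖ := by simp [h, norm_mul]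
    _ ≤ ∑ j, ‖algebraMap ℝ 𝕜 (A i j) * y j‖ := norm_sum_le _ _
    _ = (A *ᵥ fun i => ‖y i‖) i := by
      simp [mulVec, dotProduct, norm_mul, norm_algebraMap', abs_of_nonneg (hA _ _)]

theorem exists_gt_smul_le {r : ℝ} {x y : ι → ℝ} (h : ∀ i, r * x i < y i) :
    ∃ s > r, s • x ≤ y := by
  have : ∀ᶠ s in 𝓝 r, ∀ i, s * x i < y i := eventually_all.2 fun i =>
    (continuous_id.mul continuous_const).continuousAt.eventually_lt continuousAt_const (h i)
  obtain ⟨s, hs, hsx⟩ := this.exists_gt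
  exact ⟨s, hs, fun i => (hsx i).le⟩

structure IsCutIrreducible (A : Matrix ι ι ℝ) : Prop where
  nonneg : ∀ i j, 0 ≤ A i j
  exists_pos : ∀ S : Finset ι, S.Nonempty → S ≠ univ → ∃ t ∉ S, ∃ s ∈ S, 0 < A t s

theorem exists_perm_mem_iff_lt_card {n : ℕ} (S : Finset (Fin n)) :
    ∃ σ : Equiv.Perm (Fin n), ∀ i, σ i ∈ S ↔ (i : ℕ) < #S := by
  have hcard : Fintype.card {i : Fin n // (i : ℕ) < #S} = Fintype.card S := by
    rw [Fintype.card_subtype, Fin.card_filter_val_lt, Fintype.card_coe]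
    simpa using S.card_le_univ
  have hcompl : Fintype.card {i : Fin n // ¬ (i : ℕ) < #S} = Fintype.card {i // i ∉ S} := by
    rw [Fintype.card_subtype_compl, Fintype.card_subtype_compl, hcard]
  refine ⟨Equiv.subtypeCongr (Fintype.equivOfCardEq hcard) (Fintype.equivOfCardEq hcompl),
    fun i => ?_⟩
  by_cases hi : (i : ℕ) < #S
  · simp [Equiv.subtypeCongr, hi]
  · simpa [Equiv.subtypeCongr, hi] using ((Fintype.equivOfCardEq hcompl) ⟨i, hi⟩).2

theorem IsCutIrreducible.of_not_exists_perm {n : ℕ} {A : Matrix (Fin n) (Fin n) ℝ}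
    (hpos : ∀ i j, 0 ≤ A i j)
    (hirr : ¬ ∃ k : ℕ, 0 < k ∧ k < n ∧ ∃ σ : Equiv.Perm (Fin n),
      ∀ i j : Fin n, k ≤ (i : ℕ) → (j : ℕ) < k → A (σ i) (σ j) = 0) :
    A.IsCutIrreducible := by
  refine ⟨hpos, fun S hne hS => ?_⟩
  by_contra! h
  obtain ⟨σ, hσ⟩ := exists_perm_mem_iff_lt_card S
  have hlt : #S < n := by simpa using card_lt_card (ssubset_univ_iff.2 hS)
  refine hirr ⟨#S, hne.card_pos, hlt, σ, fun i j hi hj => ?_⟩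
  exact le_antisymm (h _ (by simpa [hσ] using hi) _ ((hσ j).2 hj)) (hpos _ _)

def collatzWielandt (A : Matrix ι ι ℝ) : Set ℝ :=
  {r | ∃ x ∈ stdSimplex ℝ ι, r • x ≤ A *ᵥ x}

noncomputable def perronRoot (A : Matrix ι ι ℝ) : ℝ :=
  sSup (collatzWielandt A)

variable {A : Matrix ι ι ℝ} {x : ι → ℝ}

theorem mem_collatzWielandt_of_le {r : ℝ} (hx : 0 ≤ x) (hx0 : x ≠ 0) (h : r • x ≤ A *ᵥ x) :
    r ∈ collatzWielandt A := by
  obtain ⟨i, hi⟩ := Function.ne_iff.1 hx0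
  have hsum : 0 < ∑ i, x i := sum_pos' (fun i _ => hx i) ⟨i, mem_univ i, (hx i).lt_of_ne' hi⟩
  refine ⟨(∑ i, x i)⁻¹ • x, ⟨fun i => mul_nonneg (inv_nonneg.2 hsum.le) (hx i), ?_⟩, ?_⟩
  · simp [← mul_sum, hsum.ne']
  · rw [smul_comm, mulVec_smul]
    exact smul_le_smul_of_nonneg_left h (inv_nonneg.2 hsum.le)

theorem bddAbove_collatzWielandt (hA : ∀ i j, 0 ≤ A i j) : BddAbove (collatzWielandt A) := by
  refine ⟨∑ i, ∑ j, A i j, ?_⟩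
  rintro r ⟨x, ⟨hx, hx1⟩, h⟩
  have hx_le : ∀ j, x j ≤ 1 := fun j => hx1 ▸ single_le_sum (fun k _ => hx k) (mem_univ j)
  calc r = ∑ i, r * x i := by rw [← mul_sum, hx1, mul_one]
    _ ≤ ∑ i, ∑ j, A i j * x j := sum_le_sum fun i _ => h i
    _ ≤ ∑ i, ∑ j, A i j :=
      sum_le_sum fun i _ => sum_le_sum fun j _ => mul_le_of_le_one_right (hA i j) (hx_le j)

theorem isClosed_collatzWielandt (A : Matrix ι ι ℝ) : IsClosed (collatzWielandt A) := by
  have : CompactSpace (stdSimplex ℝ ι) := isCompact_iff_compactSpace.1 (isCompact_stdSimplex ℝ ι)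
  have hC : IsClosed {p : ℝ × stdSimplex ℝ ι | p.1 • (p.2 : ι → ℝ) ≤ A *ᵥ p.2} :=
    isClosed_le (by fun_prop) (by fun_prop)
  convert isClosedMap_fst_of_compactSpace _ hC
  ext r
  exact ⟨fun ⟨x, hx, h⟩ => ⟨(r, ⟨x, hx⟩), h, rfl⟩, fun ⟨_, h, hr⟩ => hr ▸ ⟨_, Subtype.prop _, h⟩⟩

theorem le_perronRoot_of_le (hA : ∀ i j, 0 ≤ A i j) {r : ℝ} (hx : 0 ≤ x) (hx0 : x ≠ 0)
    (h : r • x ≤ A *ᵥ x) : r ≤ perronRoot A :=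
  le_csSup (bddAbove_collatzWielandt hA) (mem_collatzWielandt_of_le hx hx0 h)

theorem perronRoot_mem_collatzWielandt [Nonempty ι] (hA : ∀ i j, 0 ≤ A i j) :
    perronRoot A ∈ collatzWielandt A :=
  (isClosed_collatzWielandt A).csSup_mem
    ⟨0, mem_collatzWielandt_of_le zero_le_one one_ne_zero
      (by simpa using mulVec_nonneg hA zero_le_one)⟩
    (bddAbove_collatzWielandt hA)

theorem IsCutIrreducible.perronRoot_pos [Nontrivial ι] (hA : A.IsCutIrreducible) :
    0 < perronRoot A := by
  classical
  have hrow : ∀ i, 0 * (1 : ι → ℝ) i < (A *ᵥ 1) i := fun i => by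
    obtain ⟨j, hj⟩ := exists_ne i
    obtain ⟨t, ht, s, hs, hts⟩ := hA.exists_pos {i}ᶜ ⟨j, by simpa using hj⟩
      (by simp)
    obtain rfl : t = i := by simpa using ht
    simpa [mulVec, dotProduct] using
      hts.trans_le (single_le_sum (fun j _ => hA.nonneg t j) (mem_univ s))
  obtain ⟨s, hs, hle⟩ := exists_gt_smul_le hrow
  exact hs.trans_le (le_perronRoot_of_le hA.nonneg zero_le_one one_ne_zero hle)

noncomputable def posSupport (x : ι → ℝ) : Finset ι := {i | 0 < x i}

theorem posSupport_nonempty (hx : 0 ≤ x) (hx0 : x ≠ 0) : (posSupport x).Nonempty := by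
  obtain ⟨i, hi⟩ := Function.ne_iff.1 hx0
  exact ⟨i, by simpa [posSupport] using (hx i).lt_of_ne' hi⟩

variable [DecidableEq ι]

theorem norm_le_perronRoot_of_isRoot_charpoly (hA : ∀ i j, 0 ≤ A i j) {μ : ℂ}
    (hμ : (A.map (algebraMap ℝ ℂ)).charpoly.IsRoot μ) : ‖μ‖ ≤ perronRoot A := by
  obtain ⟨y, hy0, hy⟩ := (isRoot_charpoly_iff_exists_mulVec_eq_smul _ _).1 hμ
  obtain ⟨i, hi⟩ := Function.ne_iff.1 hy0
  exact le_perronRoot_of_le hA (fun i => norm_nonneg (y i))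
    (Function.ne_iff.2 ⟨i, by simpa using hi⟩) (norm_smul_le_mulVec_norm hA hy)

theorem one_add_mulVec (A : Matrix ι ι ℝ) (x : ι → ℝ) : (1 + A) *ᵥ x = x + A *ᵥ x := by
  rw [add_mulVec, one_mulVec]

theorem posSupport_subset_one_add_mulVec (hA : ∀ i j, 0 ≤ A i j) (hx : 0 ≤ x) :
    posSupport x ⊆ posSupport ((1 + A) *ᵥ x) := by
  intro i hi
  simp only [posSupport, mem_filter, mem_univ, true_and, one_add_mulVec, Pi.add_apply] at hi ⊢
  exact add_pos_of_pos_of_nonneg hi (mulVec_nonneg hA hx i)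

theorem IsCutIrreducible.posSupport_ssubset_one_add_mulVec (hA : A.IsCutIrreducible)
    (hx : 0 ≤ x) (hne : (posSupport x).Nonempty) (hS : posSupport x ≠ univ) :
    posSupport x ⊂ posSupport ((1 + A) *ᵥ x) := by
  obtain ⟨t, ht, s, hs, hts⟩ := hA.exists_pos _ hne hS
  refine (ssubset_iff_of_subset (posSupport_subset_one_add_mulVec hA.nonneg hx)).2 ⟨t, ?_, ht⟩
  simp only [posSupport, mem_filter, mem_univ, true_and] at hs ⊢
  have hAx : A t s * x s ≤ (A *ᵥ x) t :=
    single_le_sum (fun j _ => mul_nonneg (hA.nonneg t j) (hx j)) (mem_univ s)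
  rw [one_add_mulVec, Pi.add_apply]
  exact add_pos_of_nonneg_of_pos (hx t) (hAx.trans_lt' (mul_pos hts hs))

theorem IsCutIrreducible.one_add_pow_mulVec_pos (hA : A.IsCutIrreducible) (hx : 0 ≤ x)
    (hx0 : x ≠ 0) (i : ι) : 0 < ((1 + A) ^ (Fintype.card ι - 1) *ᵥ x) i := by
  have grow : ∀ k, posSupport ((1 + A) ^ k *ᵥ x) = univ ∨
      k + 1 ≤ #(posSupport ((1 + A) ^ k *ᵥ x)) := by
    have hB : ∀ i j, 0 ≤ (1 + A) i j := fun i j => by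
      rw [add_apply, one_apply]
      split_ifs <;> linarith [hA.nonneg i j]
    intro k
    induction k with
    | zero =>
      rw [pow_zero, one_mulVec]
      exact .inr (posSupport_nonempty hx hx0).card_pos
    | succ k ih =>
      have hy : 0 ≤ (1 + A) ^ k *ᵥ x := mulVec_nonneg (pow_apply_nonneg hB k) hx
      rw [pow_succ', ← mulVec_mulVec]
      by_cases hS : posSupport ((1 + A) ^ k *ᵥ x) = univ
      · exact .inl (univ_subset_iff.1 (hS ▸ posSupport_subset_one_add_mulVec hA.nonneg hy))
      · have hcard := ih.resolve_left hS
        have hlt := card_lt_card (hA.posSupport_ssubset_one_add_mulVec hy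
          (card_pos.1 (by omega)) hS)
        exact .inr (by omega)
  have hι : 0 < Fintype.card ι := Fintype.card_pos_iff.2 ⟨i⟩
  have huniv : posSupport ((1 + A) ^ (Fintype.card ι - 1) *ᵥ x) = univ :=
    (grow _).elim id fun h => eq_univ_of_card _ (le_antisymm (card_le_univ _) (by omega))
  have hi : i ∈ posSupport ((1 + A) ^ (Fintype.card ι - 1) *ᵥ x) := by
    rw [huniv]; exact mem_univ i
  simpa [posSupport] using hi

theorem pow_mulVec_of_mulVec_eq_smul {R : Type*} [CommRing R] {B : Matrix ι ι R} {v : ι → R}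
    {c : R} (h : B *ᵥ v = c • v) (k : ℕ) : (B ^ k) *ᵥ v = c ^ k • v := by
  induction k with
  | zero => simp
  | succ k ih => rw [pow_succ, ← mulVec_mulVec, h, mulVec_smul, ih, smul_smul, pow_succ']

theorem IsCutIrreducible.pos_of_mulVec_eq_smul (hA : A.IsCutIrreducible) (hx : 0 ≤ x)
    (hx0 : x ≠ 0) {r : ℝ} (h : A *ᵥ x = r • x) (i : ι) : 0 < x i := by
  have h1 : (1 + A) *ᵥ x = (1 + r) • x := by rw [one_add_mulVec, h, add_smul, one_smul]
  have hpos := hA.one_add_pow_mulVec_pos hx hx0 i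
  rw [pow_mulVec_of_mulVec_eq_smul h1, Pi.smul_apply, smul_eq_mul] at hpos
  exact (hx i).lt_of_ne fun h0 => by simp [← h0] at hpos

theorem IsCutIrreducible.mulVec_eq_perronRoot_smul (hA : A.IsCutIrreducible) (hx : 0 ≤ x)
    (hx0 : x ≠ 0) (h : perronRoot A • x ≤ A *ᵥ x) : A *ᵥ x = perronRoot A • x := by
  by_contra hne
  set P := (1 + A) ^ (Fintype.card ι - 1)
  have hv := hA.one_add_pow_mulVec_pos hx hx0
  obtain ⟨i, -⟩ := Function.ne_iff.1 hx0
  have hcomm : P * A = A * P := (((Commute.one_left A).add_left (Commute.refl A)).pow_left _).eq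
  -- `P` turns the nonzero defect `A *ᵥ x - ρ • x ≥ 0` into a positive one
  have hlt : ∀ i, perronRoot A * (P *ᵥ x) i < (A *ᵥ (P *ᵥ x)) i := fun i => by
    have := hA.one_add_pow_mulVec_pos (sub_nonneg.2 h) (sub_ne_zero.2 hne) i
    rwa [mulVec_sub, mulVec_smul, mulVec_mulVec, hcomm, ← mulVec_mulVec, Pi.sub_apply,
      Pi.smul_apply, smul_eq_mul, sub_pos] at this
  obtain ⟨s, hs, hle⟩ := exists_gt_smul_le hlt
  exact hs.not_ge (le_perronRoot_of_le hA.nonneg (fun i => (hv i).le)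
    (fun h0 => (hv i).ne' (congrFun h0 i)) hle)

theorem IsCutIrreducible.exists_pos_mulVec_eq_perronRoot_smul [Nonempty ι]
    (hA : A.IsCutIrreducible) : ∃ x, (∀ i, 0 < x i) ∧ A *ᵥ x = perronRoot A • x := by
  obtain ⟨x, ⟨hx, hx1⟩, h⟩ := perronRoot_mem_collatzWielandt hA.nonneg
  have hx0 : x ≠ 0 := by rintro rfl; simp at hx1
  have heig := hA.mulVec_eq_perronRoot_smul hx hx0 h
  exact ⟨x, hA.pos_of_mulVec_eq_smul hx hx0 heig, heig⟩

theorem IsCutIrreducible.isRoot_charpoly_perronRoot [Nonempty ι] (hA : A.IsCutIrreducible) :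
    A.charpoly.IsRoot (perronRoot A) := by
  obtain ⟨x, hx, heig⟩ := hA.exists_pos_mulVec_eq_perronRoot_smul
  exact (isRoot_charpoly_iff_exists_mulVec_eq_smul _ _).2
    ⟨x, fun h => (hx (Classical.arbitrary ι)).ne' (congrFun h _), heig⟩

theorem IsCutIrreducible.lt_perronRoot_of_isRoot_charpoly_submatrix {κ : Type*} [Fintype κ]
    [DecidableEq κ] (hA : A.IsCutIrreducible) {e : κ → ι} (he : Injective e)
    (hsurj : ¬ Surjective e) {s : ℝ} (hs : (A.submatrix e e).charpoly.IsRoot s) :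
    s < perronRoot A := by
  obtain ⟨z, hz0, hz⟩ := (isRoot_charpoly_iff_exists_mulVec_eq_smul _ _).1 hs
  obtain ⟨j₀, hj₀⟩ : ∃ j, j ∉ Set.range e := by simpa [Surjective] using hsurj
  set w : ι → ℝ := extend e (fun k => ‖z k‖) 0
  have hw_e : ∀ k, w (e k) = ‖z k‖ := he.extend_apply _ _
  have hw_out : ∀ j ∉ Set.range e, w j = 0 := fun j hj => extend_apply' _ _ _ (by simpa using hj)
  have hw : 0 ≤ w := fun j => by
    by_cases hj : j ∈ Set.range e
    · obtain ⟨k, rfl⟩ := hj; simp [hw_e]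
    · simp [hw_out j hj]
  have hw0 : w ≠ 0 := fun h =>
    hz0 (funext fun k => norm_eq_zero.1 (by simpa [hw_e] using congrFun h (e k)))
  have hle : ‖s‖ • w ≤ A *ᵥ w := fun j => by
    by_cases hj : j ∈ Set.range e
    · obtain ⟨k, rfl⟩ := hj
      have hz' : (A.submatrix e e).map (algebraMap ℝ ℝ) *ᵥ z = s • z := by
        rwa [Algebra.algebraMap_self, RingHom.coe_id, map_id]
      rw [Pi.smul_apply, smul_eq_mul, hw_e, mulVec_extend_zero_apply A he]
      exact norm_smul_le_mulVec_norm (fun i j => hA.nonneg (e i) (e j)) hz' k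
    · simpa [hw_out j hj] using mulVec_nonneg hA.nonneg hw j
  by_contra! hge
  have hs_eq : ‖s‖ = perronRoot A :=
    le_antisymm (le_perronRoot_of_le hA.nonneg hw hw0 hle) (hge.trans (le_abs_self s))
  have hpos :=
    hA.pos_of_mulVec_eq_smul hw hw0 (hA.mulVec_eq_perronRoot_smul hw hw0 (hs_eq ▸ hle))
  exact (hpos j₀).ne' (hw_out j₀ hj₀)

theorem IsCutIrreducible.eval_charpoly_submatrix_perronRoot_pos {κ : Type*} [Fintype κ]
    [DecidableEq κ] (hA : A.IsCutIrreducible) {e : κ → ι} (he : Injective e)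
    (hsurj : ¬ Surjective e) : 0 < (A.submatrix e e).charpoly.eval (perronRoot A) :=
  (charpoly_monic _).eval_pos_of_forall_ge_not_isRoot fun _ hs hroot =>
    (hA.lt_perronRoot_of_isRoot_charpoly_submatrix he hsurj hroot).not_ge hs

theorem IsCutIrreducible.rootMultiplicity_charpoly_perronRoot {N : ℕ}
    {A : Matrix (Fin (N + 1)) (Fin (N + 1)) ℝ} (hA : A.IsCutIrreducible) :
    A.charpoly.rootMultiplicity (perronRoot A) = 1 := by
  have hχ := (charpoly_monic A).ne_zero
  have hderiv : 0 < (derivative A.charpoly).eval (perronRoot A) := by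
    rw [derivative_charpoly, eval_finsetSum]
    exact sum_pos (fun i _ => hA.eval_charpoly_submatrix_perronRoot_pos
      Fin.succAbove_right_injective fun h => (h i).elim (Fin.succAbove_ne i)) univ_nonempty
  refine le_antisymm (not_lt.1 fun h => ?_)
    ((rootMultiplicity_pos hχ).2 hA.isRoot_charpoly_perronRoot)
  exact hderiv.ne' ((one_lt_rootMultiplicity_iff_isRoot hχ).1 h).2

end Matrix

theorem perron_frobenius (n : ℕ) (hn : 2 ≤ n) (A : Matrix (Fin n) (Fin n) ℝ)
    (hpos : ∀ i j, 0 ≤ A i j)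
    (hirr : ¬ ∃ k : ℕ, 0 < k ∧ k < n ∧ ∃ σ : Equiv.Perm (Fin n),
      ∀ i j : Fin n, k ≤ (i : ℕ) → (j : ℕ) < k → A (σ i) (σ j) = 0) :
    ∃ ρ : ℝ, 0 < ρ ∧
      IsGreatest {r : ℝ | ∃ μ : ℂ,
        (A.map (Complex.ofReal ·)).charpoly.IsRoot μ ∧ ‖μ‖ = r} ρ ∧
      (A.map (Complex.ofReal ·)).charpoly.rootMultiplicity (ρ : ℂ) = 1 ∧
      ∃ x : Fin n → ℝ, (∀ i, 0 < x i) ∧ A.mulVec x = ρ • x := by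
  obtain ⟨N, rfl⟩ : ∃ N, n = N + 1 := ⟨n - 1, by omega⟩
  have : Nontrivial (Fin (N + 1)) := Fin.nontrivial_iff_two_le.2 hn
  have hA : A.IsCutIrreducible := .of_not_exists_perm hpos hirr
  have hχ : (A.map (Complex.ofReal ·)).charpoly = A.charpoly.map (algebraMap ℝ ℂ) :=
    A.charpoly_map (algebraMap ℝ ℂ)
  refine ⟨A.perronRoot, hA.perronRoot_pos, ⟨⟨A.perronRoot, ?_, ?_⟩, ?_⟩, ?_,
    hA.exists_pos_mulVec_eq_perronRoot_smul⟩
  · rw [hχ]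
    exact hA.isRoot_charpoly_perronRoot.map
  · simp [abs_of_pos hA.perronRoot_pos]
  · rintro _ ⟨μ, hμ, rfl⟩
    exact Matrix.norm_le_perronRoot_of_isRoot_charpoly hA.nonneg hμ
  · rw [hχ]
    exact (eq_rootMultiplicity_map (algebraMap ℝ ℂ).injective _).symm.trans
      hA.rootMultiplicity_charpoly_perronRoot
end

section
/- Wielandt's primitivity bound: If A is a primitive n×n nonnegative matrix, then A^{(n−1)²+1} has all entries strictly positive. -/
/-!
Let `s` be the length of a shortest cycle in the digraph of positive entries of `A`. Such a cycle
`C` is simple, and `s < n`: a shortest cycle through all `n` vertices would leave every vertex by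
a single edge, and such a digraph is never primitive. Every vertex reaches `C` in at most `n - s`
steps, hence, walking on around `C`, in exactly `n - s` steps. In the primitive matrix `A ^ s`
every vertex of `C` carries a loop and reaches every vertex in at most `n - 1` steps, hence in
exactly `n - 1` steps. So `A ^ (n - s + s (n - 1))` is positive, and
`n - s + s (n - 1) ≤ (n - 1) ^ 2 + 1` because `1 ≤ s ≤ n - 1`.
-/

open Finset

namespace Matrix

theorem mul_apply_pos_iff {l m o R : Type*} [Fintype m] [Semiring R] [LinearOrder R]
    [IsStrictOrderedRing R] {B : Matrix l m R} {C : Matrix m o R} (hB : ∀ i j, 0 ≤ B i j)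
    (hC : ∀ i j, 0 ≤ C i j) {i : l} {j : o} :
    0 < (B * C) i j ↔ ∃ v, 0 < B i v ∧ 0 < C v j := by
  rw [mul_apply, sum_pos_iff_of_nonneg fun v _ => mul_nonneg (hB i v) (hC v j)]
  simp only [mem_univ, true_and]
  exact exists_congr fun v =>
    ⟨fun h => ⟨pos_of_mul_pos_left h (hC v j), pos_of_mul_pos_right h (hB i v)⟩,
      fun h => mul_pos h.1 h.2⟩

def IsWalk {ι R : Type*} [Zero R] [LT R] (A : Matrix ι ι R) (f : ℕ → ι) (m : ℕ) : Prop :=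
  ∀ a < m, 0 < A (f a) (f (a + 1))

variable {ι R : Type*} [Fintype ι] [DecidableEq ι] [Semiring R] [LinearOrder R]
  [IsStrictOrderedRing R] {A : Matrix ι ι R}

theorem pow_add_apply_pos_iff (hA : ∀ i j, 0 ≤ A i j) {a b : ℕ} {i j : ι} :
    0 < (A ^ (a + b)) i j ↔ ∃ v, 0 < (A ^ a) i v ∧ 0 < (A ^ b) v j := by
  rw [pow_add]
  exact mul_apply_pos_iff (pow_apply_nonneg hA a) (pow_apply_nonneg hA b)

theorem pow_succ_apply_pos_iff (hA : ∀ i j, 0 ≤ A i j) {m : ℕ} {i j : ι} :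
    0 < (A ^ (m + 1)) i j ↔ ∃ v, 0 < (A ^ m) i v ∧ 0 < A v j := by
  simp only [pow_add_apply_pos_iff hA, pow_one]

theorem IsWalk.pow_apply_pos (hA : ∀ i j, 0 ≤ A i j) {f : ℕ → ι} {m : ℕ} (hf : IsWalk A f m)
    {a b : ℕ} (hab : a ≤ b) (hbm : b ≤ m) : 0 < (A ^ (b - a)) (f a) (f b) := by
  obtain ⟨d, rfl⟩ := Nat.exists_eq_add_of_le hab
  rw [Nat.add_sub_cancel_left]
  induction d with
  | zero => simp
  | succ d ih =>
    exact (pow_succ_apply_pos_iff hA).2 ⟨f (a + d), ih (by omega) (by omega), hf (a + d) (by omega)⟩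

theorem pow_apply_pos_iff_exists_walk (hA : ∀ i j, 0 ≤ A i j) {m : ℕ} {i j : ι} :
    0 < (A ^ m) i j ↔ ∃ f : ℕ → ι, f 0 = i ∧ f m = j ∧ IsWalk A f m := by
  constructor
  · intro h
    induction m generalizing j with
    | zero =>
      obtain rfl : i = j := by by_contra hij; simp [hij] at h
      exact ⟨fun _ => i, rfl, rfl, fun a ha => absurd ha (Nat.not_lt_zero a)⟩
    | succ m ih =>
      obtain ⟨v, hv, hvj⟩ := (pow_succ_apply_pos_iff hA).1 h
      obtain ⟨f, hf0, hfm, hf⟩ := ih hv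
      refine ⟨Function.update f (m + 1) j, by simp [hf0], by simp, fun a ha => ?_⟩
      rcases Nat.lt_succ_iff_lt_or_eq.1 ha with ha | rfl
      · rw [Function.update_of_ne (by omega), Function.update_of_ne (by omega)]
        exact hf a ha
      · simpa [hfm] using hvj
  · rintro ⟨f, rfl, rfl, hf⟩
    simpa using hf.pow_apply_pos hA (Nat.zero_le m) le_rfl

theorem exists_pow_apply_pos_le_card_compl (hA : ∀ i j, 0 ≤ A i j) {S : Finset ι} {i : ι}
    (h : ∃ m, ∃ j ∈ S, 0 < (A ^ m) i j) : ∃ t ≤ #Sᶜ, ∃ j ∈ S, 0 < (A ^ t) i j := by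
  obtain ⟨j, hjS, hj⟩ := Nat.find_spec h
  refine ⟨Nat.find h, ?_, j, hjS, hj⟩
  set m := Nat.find h
  have hshort : ∀ t < m, ∀ j ∈ S, ¬ 0 < (A ^ t) i j :=
    fun t ht j hj hpos => Nat.find_min h ht ⟨j, hj, hpos⟩
  obtain ⟨f, rfl, rfl, hf⟩ := (pow_apply_pos_iff_exists_walk hA).1 hj
  have hprefix : ∀ a ≤ m, 0 < (A ^ a) (f 0) (f a) := fun a ha => by
    simpa using hf.pow_apply_pos hA (Nat.zero_le a) ha
  have hmaps : Set.MapsTo f (range m) (Sᶜ : Finset ι) := fun a ha => by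
    simp only [coe_range, Set.mem_Iio, coe_compl, Set.mem_compl_iff, mem_coe] at ha ⊢
    exact fun hfa => hshort a ha _ hfa (hprefix a ha.le)
  -- cutting out a closed walk between `a < b` gives a shorter walk into `S`
  have hcut : ∀ a b, a < b → b < m → f a ≠ f b := fun a b hab hbm heq => by
    have hsuffix := hf.pow_apply_pos hA hbm.le le_rfl
    rw [← heq] at hsuffix
    exact hshort (a + (m - b)) (by omega) _ hjS
      ((pow_add_apply_pos_iff hA).2 ⟨f a, hprefix a (by omega), hsuffix⟩)
  have hinj : Set.InjOn f (range m) := fun a ha b hb heq => by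
    simp only [coe_range, Set.mem_Iio] at ha hb
    rcases lt_trichotomy a b with hab | hab | hab
    · exact absurd heq (hcut a b hab hb)
    · exact hab
    · exact absurd heq.symm (hcut b a hab ha)
  simpa using card_le_card_of_injOn f hmaps hinj

theorem exists_pow_apply_pos_le_card_sub_one (hA : ∀ i j, 0 ≤ A i j) {i j : ι}
    (h : ∃ m, 0 < (A ^ m) i j) : ∃ t ≤ Fintype.card ι - 1, 0 < (A ^ t) i j := by
  obtain ⟨t, ht, j', hj', hpos⟩ :=
    exists_pow_apply_pos_le_card_compl hA (S := {j}) (by simpa using h)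
  rw [mem_singleton] at hj'
  subst hj'
  exact ⟨t, by simpa [card_compl] using ht, hpos⟩

theorem exists_apply_pos_of_pow_pos (hA : ∀ i j, 0 ≤ A i j) {k : ℕ} (hk : 0 < k)
    (hAk : ∀ i j, 0 < (A ^ k) i j) (i : ι) : ∃ j, 0 < A i j := by
  obtain ⟨j, hj, -⟩ := (pow_add_apply_pos_iff hA (a := 1) (b := k - 1)).1
    (by rw [Nat.add_sub_cancel' hk]; exact hAk i i)
  exact ⟨j, by simpa using hj⟩

theorem exists_pow_apply_pos (hA : ∀ i j, 0 ≤ A i j) (hrow : ∀ i, ∃ j, 0 < A i j) (m : ℕ)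
    (i : ι) : ∃ j, 0 < (A ^ m) i j := by
  induction m with
  | zero => exact ⟨i, by simp⟩
  | succ m ih =>
    obtain ⟨v, hv⟩ := ih
    obtain ⟨j, hj⟩ := hrow v
    exact ⟨j, (pow_succ_apply_pos_iff hA).2 ⟨v, hv, hj⟩⟩

theorem pow_apply_pos_of_le (hA : ∀ i j, 0 ≤ A i j) (hrow : ∀ i, ∃ j, 0 < A i j) {m m' : ℕ}
    (hm : ∀ i j, 0 < (A ^ m) i j) (h : m ≤ m') (i j : ι) : 0 < (A ^ m') i j := by
  obtain ⟨v, hv⟩ := exists_pow_apply_pos hA hrow (m' - m) i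
  rw [← Nat.sub_add_cancel h]
  exact (pow_add_apply_pos_iff hA).2 ⟨v, hv, hm v j⟩

theorem pow_apply_self_pos (hA : ∀ i j, 0 ≤ A i j) {i : ι} (hi : 0 < A i i) (m : ℕ) :
    0 < (A ^ m) i i := by
  induction m with
  | zero => simp
  | succ m ih => exact (pow_succ_apply_pos_iff hA).2 ⟨i, ih, hi⟩

theorem subsingleton_pow_apply_pos (hA : ∀ i j, 0 ≤ A i j)
    (h : ∀ i, {j | 0 < A i j}.Subsingleton) (m : ℕ) (i : ι) :
    {j | 0 < (A ^ m) i j}.Subsingleton := by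
  induction m generalizing i with
  | zero => exact fun j hj j' hj' => by by_contra hne; by_cases hij : i = j <;> simp_all
  | succ m ih =>
    intro j hj j' hj'
    replace hj : 0 < (A ^ (1 + m)) i j := by rwa [add_comm]
    replace hj' : 0 < (A ^ (1 + m)) i j' := by rwa [add_comm]
    rw [pow_add_apply_pos_iff hA, pow_one] at hj hj'
    obtain ⟨v, hv, hvj⟩ := hj
    obtain ⟨v', hv', hvj'⟩ := hj'
    obtain rfl := h i hv hv'
    exact ih v hvj hvj'

theorem exists_pow_apply_pos_mem_of_closed (hA : ∀ i j, 0 ≤ A i j) {C : Finset ι}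
    (hC : ∀ w ∈ C, ∃ w' ∈ C, 0 < A w w') {w : ι} (hw : w ∈ C) (m : ℕ) :
    ∃ w' ∈ C, 0 < (A ^ m) w w' := by
  induction m with
  | zero => exact ⟨w, hw, by simp⟩
  | succ m ih =>
    obtain ⟨v, hv, hwv⟩ := ih
    obtain ⟨w', hw', hvw'⟩ := hC v hv
    exact ⟨w', hw', (pow_succ_apply_pos_iff hA).2 ⟨v, hwv, hvw'⟩⟩

section ShortestCycle

variable {g : ℕ → ι} {s : ℕ}

theorem IsWalk.pow_apply_pos_around (hA : ∀ i j, 0 ≤ A i j) (hg : IsWalk A g s)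
    (hgs : g s = g 0) {p q : ℕ} (hq : q ≤ s) (hp : p ≤ s) :
    0 < (A ^ (s - q + p)) (g q) (g p) :=
  (pow_add_apply_pos_iff hA).2 ⟨g s, hg.pow_apply_pos hA hq le_rfl,
    by simpa [hgs] using hg.pow_apply_pos hA (Nat.zero_le p) hp⟩

theorem IsWalk.card_image_of_minimal (hA : ∀ i j, 0 ≤ A i j) (hg : IsWalk A g s)
    (hmin : ∀ ℓ, 0 < ℓ → ℓ < s → ∀ x, ¬ 0 < (A ^ ℓ) x x) : #((range s).image g) = s := by
  have hne : ∀ a b, a < b → b < s → g a ≠ g b := fun a b hab hbs heq => by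
    have hloop := hg.pow_apply_pos hA hab.le hbs.le
    rw [← heq] at hloop
    exact hmin (b - a) (by omega) (by omega) _ hloop
  refine (card_image_of_injOn fun a ha b hb heq => ?_).trans (card_range s)
  simp only [coe_range, Set.mem_Iio] at ha hb
  rcases lt_trichotomy a b with hab | hab | hab
  · exact absurd heq (hne a b hab hb)
  · exact hab
  · exact absurd heq.symm (hne b a hab ha)

theorem IsWalk.eq_succ_of_minimal (hA : ∀ i j, 0 ≤ A i j) (hg : IsWalk A g s)
    (hgs : g s = g 0) (hmin : ∀ ℓ, 0 < ℓ → ℓ < s → ∀ x, ¬ 0 < (A ^ ℓ) x x) {p q : ℕ}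
    (hp : p < s) (hq : q < s) (h : 0 < A (g p) (g q)) : g q = g (p + 1) := by
  have hlong : ∀ ℓ, 0 < (A ^ ℓ) (g q) (g p) → s ≤ ℓ + 1 := fun ℓ hℓ => by
    by_contra hlt
    exact hmin (ℓ + 1) ℓ.succ_pos (by omega) _ ((pow_succ_apply_pos_iff hA).2 ⟨g p, hℓ, h⟩)
  rcases le_or_gt q p with hqp | hpq
  · have := hlong _ (hg.pow_apply_pos hA hqp hp.le)
    rw [show q = 0 by omega, ← hgs, show p + 1 = s by omega]
  · have := hlong _ (hg.pow_apply_pos_around hA hgs hq.le hp.le)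
    rw [show q = p + 1 by omega]

theorem IsWalk.lt_card_of_minimal [Nontrivial ι] (hA : ∀ i j, 0 ≤ A i j) {k : ℕ}
    (hAk : ∀ i j, 0 < (A ^ k) i j) (hg : IsWalk A g s) (hgs : g s = g 0)
    (hmin : ∀ ℓ, 0 < ℓ → ℓ < s → ∀ x, ¬ 0 < (A ^ ℓ) x x) : s < Fintype.card ι := by
  have hcard := hg.card_image_of_minimal hA hmin
  refine lt_of_le_of_ne (hcard ▸ card_le_univ _) fun hsn => ?_
  have hsurj : ∀ y, ∃ q < s, g q = y := fun y => by
    have hy : y ∈ (range s).image g := by rw [eq_univ_of_card _ (hcard.trans hsn)]; exact mem_univ y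
    simpa using hy
  have huniq : ∀ i, {j | 0 < A i j}.Subsingleton := fun i j hj j' hj' => by
    obtain ⟨p, hp, rfl⟩ := hsurj i
    obtain ⟨q, hq, rfl⟩ := hsurj j
    obtain ⟨q', hq', rfl⟩ := hsurj j'
    exact (hg.eq_succ_of_minimal hA hgs hmin hp hq hj).trans
      (hg.eq_succ_of_minimal hA hgs hmin hp hq' hj').symm
  obtain ⟨j, j', hne⟩ := exists_pair_ne ι
  exact hne (subsingleton_pow_apply_pos hA huniq k (g 0) (hAk _ j) (hAk _ j'))

end ShortestCycle

theorem exists_cycle_lt_card [Nontrivial ι] (hA : ∀ i j, 0 ≤ A i j) {k : ℕ} (hk : 0 < k)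
    (hAk : ∀ i j, 0 < (A ^ k) i j) :
    ∃ C : Finset ι, C.Nonempty ∧ #C < Fintype.card ι ∧ (∀ w ∈ C, ∃ w' ∈ C, 0 < A w w') ∧
      ∀ w ∈ C, 0 < (A ^ #C) w w := by
  obtain ⟨v⟩ := (inferInstance : Nonempty ι)
  have hex : ∃ ℓ, 0 < ℓ ∧ ∃ x, 0 < (A ^ ℓ) x x := ⟨k, hk, v, hAk v v⟩
  obtain ⟨hs, x, hx⟩ := Nat.find_spec hex
  set s := Nat.find hex
  have hmin : ∀ ℓ, 0 < ℓ → ℓ < s → ∀ y, ¬ 0 < (A ^ ℓ) y y :=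
    fun ℓ hℓ hlt y hy => Nat.find_min hex hlt ⟨hℓ, y, hy⟩
  obtain ⟨g, hg0, hgs, hg⟩ := (pow_apply_pos_iff_exists_walk hA).1 hx
  replace hgs : g s = g 0 := hgs.trans hg0.symm
  have hcard := hg.card_image_of_minimal hA hmin
  have hmem : ∀ p < s, g p ∈ (range s).image g := fun p hp => mem_image_of_mem g (mem_range.2 hp)
  refine ⟨(range s).image g, ⟨g 0, hmem 0 hs⟩, hcard.symm ▸ hg.lt_card_of_minimal hA hAk hgs hmin,
    ?_, ?_⟩
  · intro w hw
    obtain ⟨p, hp, rfl⟩ := mem_image.1 hw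
    rw [mem_range] at hp
    refine ⟨g (p + 1), ?_, hg p hp⟩
    obtain h | h := (show p + 1 ≤ s from hp).lt_or_eq
    · exact hmem _ h
    · rw [h, hgs]; exact hmem 0 hs
  · intro w hw
    obtain ⟨p, hp, rfl⟩ := mem_image.1 hw
    rw [mem_range] at hp
    simpa [hcard, Nat.sub_add_cancel hp.le] using hg.pow_apply_pos_around hA hgs hp.le hp.le

theorem pow_apply_pos_of_cycle (hA : ∀ i j, 0 ≤ A i j) {k : ℕ} (hk : 0 < k)
    (hAk : ∀ i j, 0 < (A ^ k) i j) {C : Finset ι} (hC : C.Nonempty)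
    (hclosed : ∀ w ∈ C, ∃ w' ∈ C, 0 < A w w') {s : ℕ} (hs : 0 < s)
    (hloop : ∀ w ∈ C, 0 < (A ^ s) w w) (i j : ι) :
    0 < (A ^ (#Cᶜ + s * (Fintype.card ι - 1))) i j := by
  have hrow := exists_apply_pos_of_pow_pos hA hk hAk
  obtain ⟨w, hw⟩ := hC
  obtain ⟨t, ht, u, hu, hiu⟩ := exists_pow_apply_pos_le_card_compl hA ⟨k, w, hw, hAk i w⟩
  obtain ⟨u', hu', huu'⟩ := exists_pow_apply_pos_mem_of_closed hA hclosed hu (#Cᶜ - t)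
  have hiu' : 0 < (A ^ #Cᶜ) i u' := by
    rw [← Nat.add_sub_cancel' ht]
    exact (pow_add_apply_pos_iff hA).2 ⟨u, hiu, huu'⟩
  have hB := pow_apply_nonneg hA s
  have hBk : 0 < ((A ^ s) ^ k) u' j := by
    rw [← pow_mul]
    exact pow_apply_pos_of_le hA hrow hAk (Nat.le_mul_of_pos_left k hs) u' j
  obtain ⟨T, hT, hu'j⟩ := exists_pow_apply_pos_le_card_sub_one hB ⟨k, hBk⟩
  have hu'j' : 0 < ((A ^ s) ^ (Fintype.card ι - 1)) u' j := by
    rw [← Nat.sub_add_cancel hT]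
    exact (pow_add_apply_pos_iff hB).2 ⟨u', pow_apply_self_pos hB (hloop u' hu') _, hu'j⟩
  rw [← pow_mul] at hu'j'
  exact (pow_add_apply_pos_iff hA).2 ⟨u', hiu', hu'j'⟩

end Matrix

theorem sub_add_mul_sub_one_le {n c : ℕ} (hc : 0 < c) (hcn : c < n) :
    n - c + c * (n - 1) ≤ (n - 1) ^ 2 + 1 := by
  obtain ⟨e, rfl⟩ := Nat.exists_eq_add_of_lt hcn
  rw [show c + e + 1 - c = e + 1 by omega, Nat.add_sub_cancel]
  nlinarith

open Matrix in
theorem wielandt_primitivity (n : ℕ) (A : Matrix (Fin n) (Fin n) ℝ)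
    (hpos : ∀ i j, 0 ≤ A i j)
    (hprim : ∃ k : ℕ, 0 < k ∧ ∀ i j, 0 < (A ^ k) i j) :
    ∀ i j, 0 < (A ^ ((n - 1) ^ 2 + 1)) i j := by
  obtain ⟨k, hk, hAk⟩ := hprim
  have hrow := exists_apply_pos_of_pow_pos hpos hk hAk
  rcases subsingleton_or_nontrivial (Fin n) with hn | hn
  · exact pow_apply_pos_of_le hpos hrow (fun i j => by simp [Subsingleton.elim i j])
      (Nat.zero_le _)
  obtain ⟨C, hC, hCn, hclosed, hloop⟩ := exists_cycle_lt_card hpos hk hAk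
  refine pow_apply_pos_of_le hpos hrow (pow_apply_pos_of_cycle hpos hk hAk hC hclosed hC.card_pos
    hloop) ?_
  simp only [card_compl, Fintype.card_fin] at hCn ⊢
  exact sub_add_mul_sub_one_le hC.card_pos hCn
end

section
/- Friedland's diagonal completion theorem: Let F be an algebraically closed field, let the off-diagonal entries of an n×n matrix over F be prescribed arbitrarily, and let λ_1,…,λ_n ∈ F. Then there exist diagonal entries a_1,…,a_n ∈ F such that the resulting matrix has characteristic polynomial ∏ᵢ (x − λ_i), i.e., eigenvalues λ_1,…,λ_n. -/
/-!
Treat the diagonal entries as indeterminates `x₁, …, xₙ`. The coefficients `c₀, …, cₙ₋₁` of the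
characteristic polynomial `χ` of the resulting matrix over `F[x]` are polynomials in `x`, and the
theorem says that the polynomial map `c : Fⁿ → Fⁿ` is surjective.

In the Leibniz expansion of `χ(xᵢ) = det (xᵢ - M)` the identity permutation contributes
`∏ₖ (xᵢ - xₖ) = 0`, and every other permutation has total degree `< n`. So each `xᵢ` is a root of
the monic `χ` up to terms of lower degree, and induction on the degree shows that `F[x]` is a
finite module over `F[c]`. Comparing transcendence degrees, `c₀, …, cₙ₋₁` are algebraically
independent, and by lying over and the Nullstellensatz every value of `c` is attained.
-/

namespace MvPolynomial

open Function Set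

variable {R σ : Type*} [CommRing R]

theorem totalDegree_monomial_le_degree (s : σ →₀ ℕ) (r : R) :
    (monomial s r).totalDegree ≤ s.degree :=
  totalDegree_monomial_le s r

theorem monomial_one_mem_of_totalDegree_eval_X_lt {A : Subalgebra R (MvPolynomial σ R)}
    (M : Submodule A (MvPolynomial σ R)) (p : Polynomial (MvPolynomial σ R)) (hp : p.Monic)
    (hA : ∀ j < p.natDegree, p.coeff j ∈ A) {i : σ} (hi : (p.eval (X i)).totalDegree < p.natDegree)
    {α : σ →₀ ℕ} (hα : p.natDegree ≤ α i)
    (hM : ∀ f : MvPolynomial σ R, f.totalDegree < α.degree → f ∈ M) :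
    monomial α (1 : R) ∈ M := by
  classical
  set β := α - Finsupp.single i p.natDegree
  have hαβ : α = Finsupp.single i p.natDegree + β := by
    ext k; by_cases hk : k = i <;> simp [β, hk]; omega
  have hXN : X i ^ p.natDegree =
      p.eval (X i) - ∑ j ∈ Finset.range p.natDegree, p.coeff j * X i ^ j := by
    rw [Polynomial.eval_eq_sum_range, Finset.sum_range_succ, hp.coeff_natDegree, one_mul,
      add_sub_cancel_left]
  have hsplit : monomial α (1 : R) = p.eval (X i) * monomial β 1 -
      ∑ j ∈ Finset.range p.natDegree, p.coeff j * monomial (Finsupp.single i j + β) 1 := by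
    simp only [hαβ, monomial_single_add, hXN, sub_mul, Finset.sum_mul, mul_assoc]
  rw [hαβ, map_add, Finsupp.degree_single] at hM
  rw [hsplit]
  refine M.sub_mem (hM _ ?_) (M.sum_mem fun j hj => ?_)
  · have := totalDegree_monomial_le_degree β (1 : R)
    have := totalDegree_mul (p.eval (X i)) (monomial β (1 : R))
    omega
  · have hj := Finset.mem_range.mp hj
    refine M.smul_of_tower_mem (⟨p.coeff j, hA j hj⟩ : A) (hM _ ?_)
    have := totalDegree_monomial_le_degree (Finsupp.single i j + β) (1 : R)
    rw [map_add, Finsupp.degree_single] at this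
    omega

theorem module_finite_of_totalDegree_eval_X_lt [Finite σ] (A : Subalgebra R (MvPolynomial σ R))
    (p : σ → Polynomial (MvPolynomial σ R)) (hp : ∀ i, (p i).Monic)
    (hA : ∀ i, ∀ j < (p i).natDegree, (p i).coeff j ∈ A)
    (hX : ∀ i, ((p i).eval (X i)).totalDegree < (p i).natDegree) :
    Module.Finite A (MvPolynomial σ R) := by
  classical
  set S : Set (σ →₀ ℕ) := {α | ∀ i, α i < (p i).natDegree}
  have hS : S.Finite :=
    (Set.finite_Iic (Finsupp.equivFunOnFinite.symm fun i => (p i).natDegree)).subset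
      fun α hα i => (hα i).le
  set M := Submodule.span A ((monomial · (1 : R)) '' S)
  have hM : ∀ d, ∀ f : MvPolynomial σ R, f.totalDegree < d → f ∈ M := by
    intro d
    induction d with
    | zero => simp
    | succ d ih =>
      intro f hf
      have hf' : f ∈ restrictTotalDegree σ R d := (mem_restrictTotalDegree σ _ f).mpr (by omega)
      rw [restrictTotalDegree, restrictSupport_eq_span] at hf'
      refine Submodule.span_le.mpr ?_ (Submodule.span_le_restrictScalars R A _ hf')
      rintro _ ⟨α, hα, rfl⟩
      by_cases hαS : α ∈ S
      · exact Submodule.subset_span ⟨α, hαS, rfl⟩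
      obtain ⟨i, hi⟩ : ∃ i, (p i).natDegree ≤ α i := by simpa [S] using hαS
      exact monomial_one_mem_of_totalDegree_eval_X_lt M (p i) (hp i) (hA i) (hX i) hi
        fun g hg => ih g (hg.trans_le hα)
  exact ⟨Submodule.fg_def.mpr
    ⟨_, hS.image _, eq_top_iff.mpr fun f _ => hM _ f f.totalDegree.lt_succ_self⟩⟩

theorem exists_eval_eq_of_isIntegral {F σ : Type*} [Field F] [IsAlgClosed F] [Finite σ]
    (A : Subalgebra F (MvPolynomial σ F)) [Algebra.IsIntegral A (MvPolynomial σ F)]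
    (φ : A →ₐ[F] F) : ∃ a : σ → F, ∀ p : A, eval a (p : MvPolynomial σ F) = φ p := by
  have hφ : (RingHom.ker φ).IsMaximal :=
    RingHom.ker_isMaximal_of_surjective φ fun r => ⟨algebraMap F A r, φ.commutes r⟩
  obtain ⟨Q, hQ, hQφ⟩ := Ideal.exists_ideal_over_maximal_of_isIntegral (S := MvPolynomial σ F)
    (RingHom.ker φ) (by
      simp [(RingHom.injective_iff_ker_eq_bot (algebraMap A _)).mp Subtype.val_injective])
  obtain ⟨a, rfl⟩ := isMaximal_iff_eq_vanishingIdeal_singleton.mp hQ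
  refine ⟨a, fun p => ?_⟩
  have hp : p - algebraMap F A (φ p) ∈ RingHom.ker φ := by simp
  rw [← hQφ, Ideal.mem_comap, mem_vanishingIdeal_singleton_iff] at hp
  simpa [sub_eq_zero] using hp

theorem surjective_eval_of_isIntegral {F σ : Type*} [Field F] [IsAlgClosed F] [Finite σ]
    (c : σ → MvPolynomial σ F)
    [Algebra.IsIntegral (Algebra.adjoin F (range c)) (MvPolynomial σ F)] :
    Surjective fun a i => eval a (c i) := by
  intro μ
  have hc : AlgebraicIndependent F c :=
    (Algebra.IsAlgebraic.isTranscendenceBasis_of_lift_le_trdeg_of_finite F c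
      (by simp [MvPolynomial.trdeg_of_isDomain])).1
  obtain ⟨a, ha⟩ := exists_eval_eq_of_isIntegral _ ((aeval μ).comp hc.repr)
  refine ⟨a, ?_⟩
  ext i
  have hci : hc.aevalEquiv (X i) = ⟨c i, Algebra.subset_adjoin (mem_range_self i)⟩ :=
    Subtype.ext (aeval_X c i)
  simpa [AlgebraicIndependent.repr, ← hci] using ha (hc.aevalEquiv (X i))

end MvPolynomial

section

open MvPolynomial

variable {R : Type*} [CommRing R]

theorem Matrix.totalDegree_det_sub_prod_diag_lt {σ ι : Type*} [Fintype ι] [DecidableEq ι]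
    [Nonempty ι] (N : Matrix ι ι (MvPolynomial σ R)) (hdiag : ∀ k, (N k k).totalDegree ≤ 1)
    (hoff : ∀ k l, k ≠ l → (N k l).totalDegree = 0) :
    (N.det - ∏ k, N k k).totalDegree < Fintype.card ι := by
  rw [det_apply', ← Finset.add_sum_erase _ _ (Finset.mem_univ 1)]
  simp only [Equiv.Perm.sign_one, Units.val_one, Int.cast_one, Equiv.Perm.one_apply, one_mul,
    add_sub_cancel_left]
  refine (totalDegree_finsetSum _ _).trans_lt <|
    (Finset.sup_lt_iff (Nat.pos_of_ne_zero Fintype.card_ne_zero)).mpr fun τ hτ => ?_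
  obtain ⟨k₀, hk₀⟩ : ∃ k, τ k ≠ k := by
    by_contra! h; exact (Finset.mem_erase.mp hτ).1 (Equiv.ext h)
  calc (((Equiv.Perm.sign τ : ℤ) : MvPolynomial σ R) * ∏ k, N (τ k) k).totalDegree
      ≤ ∑ k, (N (τ k) k).totalDegree := by
        refine (totalDegree_mul _ _).trans ?_
        rw [← map_intCast (C : R →+* MvPolynomial σ R), totalDegree_C, zero_add]
        exact totalDegree_finsetProd _ _
    _ < ∑ _k : ι, 1 :=
        Finset.sum_lt_sum (fun k _ => ?_) ⟨k₀, Finset.mem_univ _, by simp [hoff _ _ hk₀]⟩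
    _ = Fintype.card ι := by simp
  by_cases hk : τ k = k
  · simpa [hk] using hdiag k
  · simp [hoff _ _ hk]

noncomputable def Matrix.genericDiagonalCompletion {ι : Type*} [DecidableEq ι]
    (B : Matrix ι ι R) : Matrix ι ι (MvPolynomial ι R) :=
  Matrix.of fun k l => if k = l then X k else C (B k l)

namespace Matrix

variable {ι : Type*} [DecidableEq ι]

theorem map_eval_genericDiagonalCompletion (B : Matrix ι ι R) (a : ι → R) :
    B.genericDiagonalCompletion.map (eval a) =
      Matrix.of fun k l => if k = l then a k else B k l := by
  ext k l
  by_cases h : k = l <;> simp [genericDiagonalCompletion, h]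

theorem totalDegree_eval_X_charpoly_genericDiagonalCompletion_lt [Fintype ι] (B : Matrix ι ι R)
    (i : ι) : (B.genericDiagonalCompletion.charpoly.eval (X i)).totalDegree < Fintype.card ι := by
  have : Nonempty ι := ⟨i⟩
  set N : Matrix ι ι (MvPolynomial ι R) := scalar ι (X i) - B.genericDiagonalCompletion
  have hN : ∀ k l, N k l = if k = l then X i - X k else -C (B k l) := by
    intro k l
    by_cases h : k = l <;> simp [N, genericDiagonalCompletion, h]
  have hdiag : ∏ k, N k k = 0 := Finset.prod_eq_zero (Finset.mem_univ i) (by simp [hN])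
  rw [eval_charpoly, ← sub_zero (det _), ← hdiag]
  refine totalDegree_det_sub_prod_diag_lt N (fun k => ?_) fun k l hkl => ?_
  · rw [hN, if_pos rfl]
    have hX : ∀ j, (X j : MvPolynomial ι R).totalDegree ≤ 1 := fun j =>
      (totalDegree_monomial_le_degree _ _).trans_eq (Finsupp.degree_single _ _)
    exact (totalDegree_sub _ _).trans (max_le (hX i) (hX k))
  · rw [hN, if_neg hkl, totalDegree_neg, totalDegree_C]

end Matrix

end

theorem Polynomial.Monic.eq_of_natDegree_eq_of_coeff_eq {R : Type*} [CommRing R]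
    {p q : Polynomial R} (hp : p.Monic) (hq : q.Monic) (hdeg : p.natDegree = q.natDegree)
    (hcoeff : ∀ j < p.natDegree, p.coeff j = q.coeff j) : p = q := by
  rw [hp.as_sum, hq.as_sum, ← hdeg]
  exact congrArg _ (Finset.sum_congr rfl fun j hj => by rw [hcoeff j (Finset.mem_range.mp hj)])

open Polynomial

theorem friedland_diagonal_completion (F : Type*) [Field F] [IsAlgClosed F]
    (n : ℕ) (B : Matrix (Fin n) (Fin n) F) (lam : Fin n → F) :
    ∃ a : Fin n → F,
      (Matrix.of fun i j => if i = j then a i else B i j).charpoly =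
        ∏ i, (X - C (lam i)) := by
  set χ := B.genericDiagonalCompletion.charpoly
  have hχ : χ.natDegree = n := by simp [χ, Matrix.charpoly_natDegree_eq_dim]
  let c : Fin n → MvPolynomial (Fin n) F := fun j => χ.coeff j
  have : Module.Finite (Algebra.adjoin F (Set.range c)) (MvPolynomial (Fin n) F) :=
    MvPolynomial.module_finite_of_totalDegree_eval_X_lt _ (fun _ => χ)
      (fun _ => Matrix.charpoly_monic _)
      (fun _ j hj => Algebra.subset_adjoin ⟨⟨j, hχ ▸ hj⟩, rfl⟩)
      fun i => by
        simpa [hχ] using B.totalDegree_eval_X_charpoly_genericDiagonalCompletion_lt i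
  have hlam : (∏ i, (X - C (lam i))).Monic := monic_prod_of_monic _ _ fun i _ => monic_X_sub_C _
  obtain ⟨a, ha⟩ := MvPolynomial.surjective_eval_of_isIntegral c
    fun j => (∏ i, (X - C (lam i))).coeff j
  refine ⟨a, (Matrix.charpoly_monic _).eq_of_natDegree_eq_of_coeff_eq hlam ?_ fun j hj => ?_⟩
  · simp [Matrix.charpoly_natDegree_eq_dim]
  · rw [Matrix.charpoly_natDegree_eq_dim, Fintype.card_fin] at hj
    rw [← Matrix.map_eval_genericDiagonalCompletion, Matrix.charpoly_map, coeff_map]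
    exact congrFun ha ⟨j, hj⟩
end
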